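/- arXiv:1605.02788 — 4 statements merged into one kernel-verified Lean document; each statement's English description precedes it below -/
import Mathlib

section
/- Let d ≥ 1, p ∈ [1,∞], Ω ⊆ ℝ^d be open, V ⊆ Ω open, and let v : Ω → ℝ be twice continuously differentiable with |∇v| ∈ L^p(Ω) and |∇²v| ∈ L^p(Ω), where ∇²v is the second derivative (Hessian) and |∇²v| its operator/Frobenius norm. Let φ : Ω → ℝ be bounded and Lipschitz with Lipschitz constant L. Then for every h ∈ ℝ^d with 0 < |h| < dist(V, ℝ^d \ Ω), one has ‖∇[φ · (v_h − v)]‖_{L^p(V)} ≤ (sup_{x∈V} |φ(x)| + L) · |h| · ( ‖ |∇v| ‖_{L^p(Ω)} + ‖ |∇²v| ‖_{L^p(Ω)} ). -/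
/-!
Write `w = v_h - v`. The product rule with a Lipschitz factor gives, pointwise on `V`,
`|∇(φ w)| ≤ sup_V |φ| · |∇v_h - ∇v| + L · |w|`, so it suffices to bound `‖u_h - u‖_{L^p(V)}`
by `|h| ‖∇u‖_{L^p(Ω)}` for `u = v` and `u = ∇v`. Since the segments `[x, x + h]`, `x ∈ V`,
stay in `Ω`, `|u(x + h) - u(x)| ≤ |h| ∫₀¹ |∇u(x + t h)| dt`. By Jensen and Tonelli, the
`L^p(V)` norm of this average over `t` is at most the largest `L^p(V)` norm of a translate
`|∇u|(· + t h)`, and each of these is at most `‖∇u‖_{L^p(Ω)}` by translation invariance of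
Lebesgue measure.
-/

open MeasureTheory
open scoped ENNReal

/-- Distance between two sets, valued in `ℝ≥0∞` (so that it is `∞` when the
second set is empty). -/
noncomputable def setEDist {d : ℕ} (V W : Set (EuclideanSpace ℝ (Fin d))) : ℝ≥0∞ :=
  ⨅ (x ∈ V) (y ∈ W), edist x y

open Set Filter Topology
open scoped NNReal

theorem ENNReal.rpow_lintegral_le_lintegral_rpow {β : Type*} [MeasurableSpace β] {ν : Measure β}
    [IsProbabilityMeasure ν] {g : β → ℝ≥0∞} (hg : AEMeasurable g ν) {r : ℝ} (hr : 1 ≤ r) :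
    (∫⁻ y, g y ∂ν) ^ r ≤ ∫⁻ y, g y ^ r ∂ν := by
  have h := eLpNorm'_le_eLpNorm'_of_exponent_le one_pos hr ν hg.aestronglyMeasurable
  simp only [eLpNorm'_eq_lintegral_enorm, enorm_eq_self, ENNReal.rpow_one, div_one] at h
  rwa [one_div, ENNReal.le_rpow_inv_iff (by linarith)] at h

theorem eLpNorm_lintegral_le {α β : Type*} [MeasurableSpace α] [MeasurableSpace β]
    {μ : Measure α} [SFinite μ] {ν : Measure β} [IsProbabilityMeasure ν]
    {F : α → β → ℝ≥0∞} (hF : Measurable (Function.uncurry F)) {p : ℝ≥0∞} (hp : 1 ≤ p)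
    {C : ℝ≥0∞} (hC : ∀ᵐ y ∂ν, eLpNorm (F · y) p μ ≤ C) :
    eLpNorm (fun x => ∫⁻ y, F x y ∂ν) p μ ≤ C := by
  rcases eq_or_ne p ∞ with rfl | hp_top
  · have hae : ∀ᵐ y ∂ν, ∀ᵐ x ∂μ, F x y ≤ C := by
      filter_upwards [hC] with y hy
      rw [eLpNorm_exponent_top] at hy
      filter_upwards [ae_le_eLpNormEssSup (f := (F · y)) (μ := μ)] with x hx
      exact hx.trans hy
    replace hae := (Measure.ae_ae_comm (p := fun x y => F x y ≤ C)
      (measurableSet_le hF measurable_const)).2 hae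
    rw [eLpNorm_exponent_top]
    refine eLpNormEssSup_le_of_ae_enorm_bound ?_
    filter_upwards [hae] with x hx
    calc ∫⁻ y, F x y ∂ν ≤ ∫⁻ _, C ∂ν := lintegral_mono_ae hx
      _ = C := by simp
  have hp0 : p ≠ 0 := (zero_lt_one.trans_le hp).ne'
  have hr : 1 ≤ p.toReal := by simpa using ENNReal.toReal_mono hp_top hp
  have hr0 : 0 < p.toReal := zero_lt_one.trans_le hr
  have hpow : ∀ f : α → ℝ≥0∞, eLpNorm f p μ ≤ C ↔ ∫⁻ x, f x ^ p.toReal ∂μ ≤ C ^ p.toReal := by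
    intro f
    rw [eLpNorm_eq_lintegral_rpow_enorm_toReal hp0 hp_top, one_div, ENNReal.rpow_inv_le_iff hr0]
    simp only [enorm_eq_self]
  rw [hpow]
  calc ∫⁻ x, (∫⁻ y, F x y ∂ν) ^ p.toReal ∂μ
      ≤ ∫⁻ x, ∫⁻ y, F x y ^ p.toReal ∂ν ∂μ := lintegral_mono fun x =>
        ENNReal.rpow_lintegral_le_lintegral_rpow hF.of_uncurry_left.aemeasurable hr
    _ = ∫⁻ y, ∫⁻ x, F x y ^ p.toReal ∂μ ∂ν :=
        lintegral_lintegral_swap (hF.pow_const _).aemeasurable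
    _ ≤ ∫⁻ _, C ^ p.toReal ∂ν :=
        lintegral_mono_ae (by filter_upwards [hC] with y hy using (hpow _).1 hy)
    _ = C ^ p.toReal := by simp

theorem eLpNorm_comp_add_right_le {E ε : Type*} [AddGroup E] [MeasurableSpace E] [MeasurableAdd E]
    [TopologicalSpace ε] [ContinuousENorm ε] {μ : Measure E} [μ.IsAddRightInvariant]
    {Ω V : Set E} (hΩ : MeasurableSet Ω) {c : E} (hc : ∀ x ∈ V, x + c ∈ Ω) (f : E → ε) (p : ℝ≥0∞) :
    eLpNorm (fun x => f (x + c)) p (μ.restrict V) ≤ eLpNorm f p (μ.restrict Ω) := by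
  have hpres := (measurePreserving_add_right μ c).restrict_preimage hΩ
  calc eLpNorm (fun x => f (x + c)) p (μ.restrict V)
      ≤ eLpNorm (f ∘ (· + c)) p (μ.restrict ((· + c) ⁻¹' Ω)) :=
        eLpNorm_mono_measure _ (Measure.restrict_mono_set μ hc)
    _ = eLpNorm f p (Measure.map (· + c) (μ.restrict ((· + c) ⁻¹' Ω))) :=
        ((MeasurableEquiv.addRight c).measurableEmbedding.eLpNorm_map_measure).symm
    _ = eLpNorm f p (μ.restrict Ω) := by rw [hpres.map_eq]

theorem eLpNorm_le_of_norm_le_add {α F G₁ G₂ : Type*} [MeasurableSpace α] {μ : Measure α}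
    [NormedAddCommGroup F] [NormedAddCommGroup G₁] [NormedAddCommGroup G₂] {f : α → F}
    {g₁ : α → G₁} {g₂ : α → G₂} (hg₁ : AEStronglyMeasurable g₁ μ)
    (hg₂ : AEStronglyMeasurable g₂ μ) {p : ℝ≥0∞} (hp : 1 ≤ p) {a b : ℝ≥0}
    (hf : ∀ᵐ x ∂μ, ‖f x‖ ≤ a * ‖g₁ x‖ + b * ‖g₂ x‖) :
    eLpNorm f p μ ≤ a * eLpNorm g₁ p μ + b * eLpNorm g₂ p μ := by
  calc eLpNorm f p μ ≤ eLpNorm ((a : ℝ) • (fun x => ‖g₁ x‖) + (b : ℝ) • fun x => ‖g₂ x‖) p μ := by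
        refine eLpNorm_mono_ae ?_
        filter_upwards [hf] with x hx
        have hnonneg : 0 ≤ (a : ℝ) * ‖g₁ x‖ + b * ‖g₂ x‖ := by positivity
        simpa [Real.norm_of_nonneg hnonneg] using hx
    _ ≤ eLpNorm ((a : ℝ) • fun x => ‖g₁ x‖) p μ + eLpNorm ((b : ℝ) • fun x => ‖g₂ x‖) p μ :=
        eLpNorm_add_le (hg₁.norm.const_smul _) (hg₂.norm.const_smul _) hp
    _ = a * eLpNorm g₁ p μ + b * eLpNorm g₂ p μ := by
        rw [eLpNorm_const_smul, eLpNorm_const_smul, eLpNorm_norm, eLpNorm_norm,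
          NNReal.enorm_eq, NNReal.enorm_eq]

theorem ContinuousOn.aestronglyMeasurable_comp_add_right_sub {E G : Type*} [NormedAddCommGroup E]
    [NormedAddCommGroup G] [MeasurableSpace E] [OpensMeasurableSpace E] [SecondCountableTopology E]
    {μ : Measure E} {g : E → G} {Ω V : Set E} (hg : ContinuousOn g Ω) (hV : MeasurableSet V)
    {h : E} (hshift : ∀ x ∈ V, x + h ∈ Ω) (hVΩ : V ⊆ Ω) :
    AEStronglyMeasurable (fun x => g (x + h) - g x) (μ.restrict V) :=
  ((hg.comp (continuous_add_const h).continuousOn hshift).sub (hg.mono hVΩ)).aestronglyMeasurable hV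

section Calculus

variable {E F : Type*} [NormedAddCommGroup E] [NormedSpace ℝ E] [NormedAddCommGroup F]
  [NormedSpace ℝ F]

theorem enorm_sub_le_lintegral_fderiv_segment {u : E → F} {Ω : Set E} (hu : ContDiffOn ℝ 1 u Ω)
    (hΩ : IsOpen Ω) {x h : E} (hseg : ∀ t ∈ Icc (0 : ℝ) 1, x + t • h ∈ Ω) :
    ‖u (x + h) - u x‖ₑ ≤ ‖h‖ₑ * ∫⁻ t in Icc (0 : ℝ) 1, ‖fderiv ℝ u (x + t • h)‖ₑ := by
  have hline : ∀ t : ℝ, HasDerivAt (fun s : ℝ => x + s • h) h t := fun t => by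
    simpa using ((hasDerivAt_id t).smul_const h).const_add x
  have hf : ContDiffOn ℝ 1 (fun t : ℝ => u (x + t • h)) (Icc 0 1) :=
    hu.comp (contDiff_const.add (contDiff_id.smul contDiff_const)).contDiffOn hseg
  have hderiv : ∀ t ∈ Icc (0 : ℝ) 1,
      ‖deriv (fun s : ℝ => u (x + s • h)) t‖ₑ ≤ ‖h‖ₑ * ‖fderiv ℝ u (x + t • h)‖ₑ := by
    intro t ht
    have hu_t : DifferentiableAt ℝ u (x + t • h) :=
      (hu.differentiableOn one_ne_zero).differentiableAt (hΩ.mem_nhds (hseg t ht))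
    have hcomp : HasDerivAt (fun s : ℝ => u (x + s • h)) (fderiv ℝ u (x + t • h) h) t :=
      hu_t.hasFDerivAt.comp_hasDerivAt t (hline t)
    rw [hcomp.deriv, mul_comm]
    exact ContinuousLinearMap.le_opENorm _ _
  calc ‖u (x + h) - u x‖ₑ ≤ ∫⁻ t in Icc (0 : ℝ) 1, ‖deriv (fun s : ℝ => u (x + s • h)) t‖ₑ := by
        simpa using enorm_sub_le_lintegral_deriv_of_contDiffOn_Icc hf zero_le_one
    _ ≤ ∫⁻ t in Icc (0 : ℝ) 1, ‖h‖ₑ * ‖fderiv ℝ u (x + t • h)‖ₑ :=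
        setLIntegral_mono' measurableSet_Icc hderiv
    _ = ‖h‖ₑ * ∫⁻ t in Icc (0 : ℝ) 1, ‖fderiv ℝ u (x + t • h)‖ₑ :=
        lintegral_const_mul' _ _ enorm_ne_top

theorem eLpNorm_comp_add_right_sub_le [MeasurableSpace E] [BorelSpace E] [SecondCountableTopology E]
    [CompleteSpace F] {μ : Measure E} [μ.IsAddRightInvariant] [SFinite μ] {u : E → F}
    {Ω V : Set E} (hu : ContDiffOn ℝ 1 u Ω) (hΩ : IsOpen Ω) (hV : MeasurableSet V) {h : E}
    (hseg : ∀ x ∈ V, ∀ t ∈ Icc (0 : ℝ) 1, x + t • h ∈ Ω) {p : ℝ≥0∞} (hp : 1 ≤ p) :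
    eLpNorm (fun x => u (x + h) - u x) p (μ.restrict V) ≤
      ‖h‖ₑ * eLpNorm (fderiv ℝ u) p (μ.restrict Ω) := by
  have : IsProbabilityMeasure (volume.restrict (Icc (0 : ℝ) 1)) := ⟨by simp⟩
  have hmeas : Measurable (Function.uncurry fun x (t : ℝ) => ‖fderiv ℝ u (x + t • h)‖ₑ) :=
    (measurable_fderiv ℝ u).enorm.comp (by fun_prop)
  calc eLpNorm (fun x => u (x + h) - u x) p (μ.restrict V)
      ≤ ‖h‖₊ • eLpNorm (fun x => ∫⁻ t in Icc (0 : ℝ) 1, ‖fderiv ℝ u (x + t • h)‖ₑ) p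
          (μ.restrict V) :=
        eLpNorm_le_nnreal_smul_eLpNorm_of_ae_le_mul' (ae_restrict_of_forall_mem hV fun x hx =>
          enorm_sub_le_lintegral_fderiv_segment hu hΩ (hseg x hx)) p
    _ ≤ ‖h‖ₑ * eLpNorm (fderiv ℝ u) p (μ.restrict Ω) := by
        refine mul_le_mul_right (eLpNorm_lintegral_le hmeas hp ?_) _
        refine ae_restrict_of_forall_mem measurableSet_Icc fun t ht => ?_
        rw [eLpNorm_enorm]
        exact eLpNorm_comp_add_right_le hΩ.measurableSet (fun x hx => hseg x hx t ht) _ p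

theorem norm_fderiv_smul_le_of_lipschitzWith {φ : E → ℝ} {K : ℝ≥0} (hφ : LipschitzWith K φ)
    {w : E → F} {x : E} (hw : DifferentiableAt ℝ w x) :
    ‖fderiv ℝ (fun y => φ y • w y) x‖ ≤ |φ x| * ‖fderiv ℝ w x‖ + K * ‖w x‖ := by
  by_cases hd : DifferentiableAt ℝ (fun y => φ y • w y) x
  swap
  · rw [fderiv_zero_of_not_differentiableAt hd, norm_zero]
    positivity
  set g : E → F := fun y => (φ y - φ x) • w y with hg_def
  have hsplit : (fun y => φ y • w y) = fun y => φ x • w y + g y := by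
    funext y
    simp [g, sub_smul]
  have hg : DifferentiableAt ℝ g x := by
    simpa [hg_def, sub_smul] using hd.fun_sub (hw.fun_const_smul (φ x))
  -- `g` vanishes at `x` and is locally `C`-Lipschitz there for every `C > K ‖w x‖`.
  have hg_bound : ‖fderiv ℝ g x‖ ≤ K * ‖w x‖ := by
    refine le_of_forall_gt_imp_ge_of_dense fun C hC => ?_
    have hnear : ∀ᶠ y in 𝓝 x, K * ‖w y‖ < C :=
      (continuousAt_const.mul hw.continuousAt.norm).eventually_lt continuousAt_const hC
    refine hg.hasFDerivAt.le_of_lip' ((by positivity : (0 : ℝ) ≤ K * ‖w x‖).trans hC.le) ?_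
    filter_upwards [hnear] with y hy
    have hφy : |φ y - φ x| ≤ K * ‖y - x‖ := by
      simpa [Real.dist_eq, dist_eq_norm] using hφ.dist_le_mul y x
    calc ‖g y - g x‖ = |φ y - φ x| * ‖w y‖ := by simp [g, norm_smul]
      _ ≤ K * ‖y - x‖ * ‖w y‖ := by gcongr
      _ = K * ‖w y‖ * ‖y - x‖ := by ring
      _ ≤ C * ‖y - x‖ := by gcongr
  rw [hsplit, fderiv_fun_add (hw.fun_const_smul _) hg, fderiv_fun_const_smul hw]
  calc ‖φ x • fderiv ℝ w x + fderiv ℝ g x‖ ≤ ‖φ x • fderiv ℝ w x‖ + ‖fderiv ℝ g x‖ :=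
        norm_add_le _ _
    _ ≤ |φ x| * ‖fderiv ℝ w x‖ + K * ‖w x‖ := by
        rw [norm_smul, Real.norm_eq_abs]
        gcongr

theorem eLpNorm_norm_iteratedFDeriv_two [MeasurableSpace E] (f : E → F)
    (p : ℝ≥0∞) (μ : Measure E) :
    eLpNorm (fun x => ‖iteratedFDeriv ℝ 2 f x‖) p μ = eLpNorm (fderiv ℝ (fderiv ℝ f)) p μ := by
  simp only [← norm_iteratedFDeriv_fderiv (n := 1), ← norm_iteratedFDeriv_fderiv (n := 0),
    norm_iteratedFDeriv_zero, eLpNorm_norm]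

theorem norm_fderiv_smul_sub_comp_add_right_le {φ : E → ℝ} {K : ℝ≥0} (hφ : LipschitzWith K φ)
    {u : E → F} {x h : E} (hx : DifferentiableAt ℝ u x) (hxh : DifferentiableAt ℝ u (x + h)) :
    ‖fderiv ℝ (fun y => φ y • (u (y + h) - u y)) x‖ ≤
      |φ x| * ‖fderiv ℝ u (x + h) - fderiv ℝ u x‖ + K * ‖u (x + h) - u x‖ := by
  have hxh' : DifferentiableAt ℝ (fun y => u (y + h)) x := (differentiableAt_comp_add_right h).2 hxh
  have := norm_fderiv_smul_le_of_lipschitzWith hφ (hxh'.fun_sub hx)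
  rwa [fderiv_fun_sub hxh' hx, fderiv_comp_add_right] at this

theorem eLpNorm_fderiv_smul_sub_comp_add_right_le [MeasurableSpace E] [BorelSpace E]
    [SecondCountableTopology E] [CompleteSpace F] {μ : Measure E} [μ.IsAddRightInvariant]
    [SFinite μ] {φ : E → ℝ} {K M : ℝ≥0} (hφ : LipschitzWith K φ) {Ω V : Set E}
    (hM : ∀ x ∈ V, |φ x| ≤ M) {u : E → F} (hu : ContDiffOn ℝ 2 u Ω) (hΩ : IsOpen Ω)
    (hV : MeasurableSet V) {h : E} (hseg : ∀ x ∈ V, ∀ t ∈ Icc (0 : ℝ) 1, x + t • h ∈ Ω)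
    {p : ℝ≥0∞} (hp : 1 ≤ p) :
    eLpNorm (fderiv ℝ fun y => φ y • (u (y + h) - u y)) p (μ.restrict V) ≤
      M * (‖h‖ₑ * eLpNorm (fderiv ℝ (fderiv ℝ u)) p (μ.restrict Ω)) +
        K * (‖h‖ₑ * eLpNorm (fderiv ℝ u) p (μ.restrict Ω)) := by
  have hVΩ : V ⊆ Ω := fun x hx => by simpa using hseg x hx 0 (by simp)
  have hshift : ∀ x ∈ V, x + h ∈ Ω := fun x hx => by simpa using hseg x hx 1 (by simp)
  have hu1 : ContDiffOn ℝ 1 u Ω := hu.of_le one_le_two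
  have hDu : ContDiffOn ℝ 1 (fderiv ℝ u) Ω := hu.fderiv_of_isOpen hΩ (by norm_num)
  have hdiff : ∀ x ∈ Ω, DifferentiableAt ℝ u x := fun x hx =>
    (hu1.differentiableOn one_ne_zero).differentiableAt (hΩ.mem_nhds hx)
  refine (eLpNorm_le_of_norm_le_add (a := M) (b := K)
    (hDu.continuousOn.aestronglyMeasurable_comp_add_right_sub hV hshift hVΩ)
    (hu1.continuousOn.aestronglyMeasurable_comp_add_right_sub hV hshift hVΩ) hp
    (ae_restrict_of_forall_mem hV fun x hx => ?_)).trans ?_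
  · refine (norm_fderiv_smul_sub_comp_add_right_le hφ (hdiff x (hVΩ hx))
      (hdiff _ (hshift x hx))).trans ?_
    gcongr
    exact hM x hx
  · gcongr
    exacts [eLpNorm_comp_add_right_sub_le hDu hΩ hV hseg hp,
      eLpNorm_comp_add_right_sub_le hu1 hΩ hV hseg hp]

end Calculus

theorem add_smul_mem_of_ofReal_norm_lt_setEDist {d : ℕ} {Ω V : Set (EuclideanSpace ℝ (Fin d))}
    {h : EuclideanSpace ℝ (Fin d)} (hh : ENNReal.ofReal ‖h‖ < setEDist V Ωᶜ) :
    ∀ x ∈ V, ∀ t ∈ Icc (0 : ℝ) 1, x + t • h ∈ Ω := by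
  intro x hx t ht
  by_contra hout
  have hdist : edist x (x + t • h) ≤ ENNReal.ofReal ‖h‖ := by
    rw [edist_dist, dist_self_add_right, norm_smul, Real.norm_of_nonneg ht.1]
    exact ENNReal.ofReal_le_ofReal (mul_le_of_le_one_left (norm_nonneg h) ht.2)
  exact (hdist.trans_lt hh).not_ge (iInf₂_le_of_le x hx (iInf₂_le (x + t • h) hout))

theorem abs_le_biSup_of_abs_le {α : Type*} {φ : α → ℝ} {C : ℝ} (hC : ∀ x, |φ x| ≤ C)
    {V : Set α} {x : α} (hx : x ∈ V) : |φ x| ≤ ⨆ y ∈ V, |φ y| :=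
  le_ciSup₂ (f := fun y (_ : y ∈ V) => |φ y|)
    ⟨C, by rintro _ ⟨_, ⟨y, rfl⟩, ⟨_, rfl⟩⟩; exact hC y⟩ x hx

theorem grad_of_cutoff_translate_diff_le_general
    (d : ℕ) (p : ℝ≥0∞) (hp : 1 ≤ p)
    (Ω V : Set (EuclideanSpace ℝ (Fin d))) (hΩ : IsOpen Ω) (hV : IsOpen V)
    (v : EuclideanSpace ℝ (Fin d) → ℝ)
    (hv : ContDiffOn ℝ 2 v Ω)
    (φ : EuclideanSpace ℝ (Fin d) → ℝ) (L : ℝ) (hL : 0 ≤ L)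
    (hφL : LipschitzWith (Real.toNNReal L) φ)
    (hφb : ∃ C : ℝ, ∀ x, |φ x| ≤ C)
    (h : EuclideanSpace ℝ (Fin d))
    (hhd : ENNReal.ofReal ‖h‖ < setEDist V Ωᶜ) :
    eLpNorm (fun x => ‖fderiv ℝ (fun y => φ y * (v (y + h) - v y)) x‖) p
        (volume.restrict V) ≤
      ENNReal.ofReal (((⨆ x ∈ V, |φ x|) + L) * ‖h‖) *
        (eLpNorm (fun x => ‖fderiv ℝ v x‖) p (volume.restrict Ω) +
          eLpNorm (fun x => ‖iteratedFDeriv ℝ 2 v x‖) p (volume.restrict Ω)) := by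
  obtain ⟨C, hC⟩ := hφb
  set M := ⨆ x ∈ V, |φ x|
  have hM0 : 0 ≤ M := Real.iSup_nonneg fun x => Real.iSup_nonneg fun _ => abs_nonneg _
  have hM : ∀ x ∈ V, |φ x| ≤ M.toNNReal := fun x hx =>
    (abs_le_biSup_of_abs_le hC hx).trans (Real.le_coe_toNNReal M)
  have key := eLpNorm_fderiv_smul_sub_comp_add_right_le (μ := volume) hφL hM hv hΩ
    hV.measurableSet (add_smul_mem_of_ofReal_norm_lt_setEDist hhd) hp
  rw [eLpNorm_norm, eLpNorm_norm, eLpNorm_norm_iteratedFDeriv_two]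
  set E₁ := eLpNorm (fderiv ℝ v) p (volume.restrict Ω)
  set E₂ := eLpNorm (fderiv ℝ (fderiv ℝ v)) p (volume.restrict Ω)
  calc _ ≤ M.toNNReal * (‖h‖ₑ * E₂) + L.toNNReal * (‖h‖ₑ * E₁) := key
    _ ≤ M.toNNReal * (‖h‖ₑ * (E₁ + E₂)) + L.toNNReal * (‖h‖ₑ * (E₁ + E₂)) := by
        gcongr
        exacts [le_add_self, le_self_add]
    _ = ENNReal.ofReal ((M + L) * ‖h‖) * (E₁ + E₂) := by
        rw [ENNReal.ofReal_mul (by positivity), ENNReal.ofReal_add hM0 hL, ofReal_norm]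
        simp only [ENNReal.ofReal]
        ring

/-- If `v` is `C²` on an open set `Ω ⊆ ℝ^d` with `|∇v|, |∇²v| ∈ L^p(Ω)`,
`V ⊆ Ω` is open, `φ` is bounded and Lipschitz with constant `L`, and
`0 < |h| < dist(V, ℝ^d \ Ω)`, then
`‖∇[φ (v_h − v)]‖_{L^p(V)} ≤ (sup_V |φ| + L) |h| (‖|∇v|‖_{L^p(Ω)} + ‖|∇²v|‖_{L^p(Ω)})`. -/
theorem grad_of_cutoff_translate_diff_le
    (d : ℕ) (hd : 1 ≤ d) (p : ℝ≥0∞) (hp : 1 ≤ p)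
    (Ω V : Set (EuclideanSpace ℝ (Fin d))) (hΩ : IsOpen Ω) (hV : IsOpen V) (hVΩ : V ⊆ Ω)
    (v : EuclideanSpace ℝ (Fin d) → ℝ)
    (hv : ContDiffOn ℝ 2 v Ω)
    (hgp : MemLp (fun x => ‖fderiv ℝ v x‖) p (volume.restrict Ω))
    (hg2p : MemLp (fun x => ‖iteratedFDeriv ℝ 2 v x‖) p (volume.restrict Ω))
    (φ : EuclideanSpace ℝ (Fin d) → ℝ) (L : ℝ) (hL : 0 ≤ L)
    (hφL : LipschitzWith (Real.toNNReal L) φ)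
    (hφb : ∃ C : ℝ, ∀ x, |φ x| ≤ C)
    (h : EuclideanSpace ℝ (Fin d)) (hh0 : h ≠ 0)
    (hhd : ENNReal.ofReal ‖h‖ < setEDist V Ωᶜ) :
    eLpNorm (fun x => ‖fderiv ℝ (fun y => φ y * (v (y + h) - v y)) x‖) p
        (volume.restrict V) ≤
      ENNReal.ofReal (((⨆ x ∈ V, |φ x|) + L) * ‖h‖) *
        (eLpNorm (fun x => ‖fderiv ℝ v x‖) p (volume.restrict Ω) +
          eLpNorm (fun x => ‖iteratedFDeriv ℝ 2 v x‖) p (volume.restrict Ω)) :=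
  grad_of_cutoff_translate_diff_le_general d p hp Ω V hΩ hV v hv φ L hL hφL hφb h hhd
end

section
/- Let d ≥ 1 and 0 < γ₁ < 1. Let u : ℝ^d → ℝ be continuously differentiable with u ∈ L²(ℝ^d) and |∇u| ∈ L²(ℝ^d). Then for every h ∈ ℝ^d, h ≠ 0, the function u − u_h satisfies [u − u_h]_{γ₁,2} ≤ 2 · |h|^{1 − γ₁} · ‖ |∇u| ‖_{L²(ℝ^d)}. -/
/-!
Write `Δₖv = v(· + k) - v`. Along the segment from `x` to `x + k`,
`Δₖu(x) = ∫₀¹ Du(x + tk) k dt`; Jensen's inequality in `t`, Tonelli and the translation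
invariance of Lebesgue measure give `‖Δₖu‖_p ≤ |k| ‖Du‖_p`. Since `Δₖ` and `Δₕ` commute and
translations are isometries of `L^p`, `‖Δₖ(u - u_h)‖₂` is at most both `2|k| ‖Du‖₂` and
`2|h| ‖Du‖₂`, hence at most `2 min(|k|, |h|) ‖Du‖₂ ≤ 2 |k|^γ |h|^(1-γ) ‖Du‖₂`.
-/

open MeasureTheory
open scoped ENNReal

/-- The Nikolskii seminorm `[u]_{γ,p} = sup_{k ≠ 0} ‖u_k − u‖_{L^p} / |k|^γ`,
valued in `ℝ≥0∞`. -/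
noncomputable def nikSeminorm (d : ℕ) (γ : ℝ) (p : ℝ≥0∞)
    (u : EuclideanSpace ℝ (Fin d) → ℝ) : ℝ≥0∞ :=
  ⨆ (k : EuclideanSpace ℝ (Fin d)) (_ : k ≠ 0),
    eLpNorm (fun x => u (x + k) - u x) p volume / ENNReal.ofReal (‖k‖ ^ γ)

open Set

theorem Real.min_le_rpow_mul_rpow {a b γ : ℝ} (ha : 0 ≤ a) (hb : 0 ≤ b) (hγ₀ : 0 ≤ γ)
    (hγ₁ : γ ≤ 1) : min a b ≤ a ^ γ * b ^ (1 - γ) := by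
  have hm : 0 ≤ min a b := le_min ha hb
  calc min a b = min a b ^ γ * min a b ^ (1 - γ) := by
        rw [← Real.rpow_add' hm (by norm_num), add_sub_cancel, Real.rpow_one]
    _ ≤ a ^ γ * b ^ (1 - γ) := by
        gcongr
        exacts [min_le_left a b, min_le_right a b]

theorem ENNReal.rpow_lintegral_le_lintegral_rpow_s4 {α : Type*} [MeasurableSpace α] {ν : Measure α}
    [IsProbabilityMeasure ν] {f : α → ℝ≥0∞} (hf : AEMeasurable f ν) {q : ℝ} (hq : 1 ≤ q) :
    (∫⁻ a, f a ∂ν) ^ q ≤ ∫⁻ a, f a ^ q ∂ν := by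
  have hq₀ : 0 < q := by linarith
  have h := eLpNorm_le_eLpNorm_of_exponent_le (p := 1) (q := ENNReal.ofReal q)
    (by simpa using hq) hf.aestronglyMeasurable
  rw [eLpNorm_one_eq_lintegral_enorm, eLpNorm_eq_lintegral_rpow_enorm_toReal (by simpa using hq₀)
    ENNReal.ofReal_ne_top, ENNReal.toReal_ofReal hq₀.le] at h
  simpa [← ENNReal.rpow_mul, hq₀.ne'] using ENNReal.rpow_le_rpow h hq₀.le

section

variable {E F : Type*} [NormedAddCommGroup E] [NormedSpace ℝ E]
  [NormedAddCommGroup F] [NormedSpace ℝ F] [CompleteSpace F] {u : E → F}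

theorem ContDiff.enorm_sub_le_mul_lintegral_enorm_fderiv (hu : ContDiff ℝ 1 u) (x k : E) :
    ‖u (x + k) - u x‖ₑ ≤ ‖k‖ₑ * ∫⁻ t in Ioc (0 : ℝ) 1, ‖fderiv ℝ u (x + t • k)‖ₑ := by
  have hline : ∀ t : ℝ, HasDerivAt (fun s : ℝ => u (x + s • k)) (fderiv ℝ u (x + t • k) k) t :=
    fun t => ((hu.differentiable one_ne_zero _).hasFDerivAt).comp_hasDerivAt t
      (((hasDerivAt_id t).smul_const k).const_add x |>.congr_deriv (one_smul ℝ k))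
  have hcont : Continuous fun t : ℝ => fderiv ℝ u (x + t • k) k :=
    ((hu.continuous_fderiv one_ne_zero).comp (by fun_prop)).clm_apply continuous_const
  have hftc : u (x + k) - u x = ∫ t in Ioc (0 : ℝ) 1, fderiv ℝ u (x + t • k) k := by
    rw [← intervalIntegral.integral_of_le zero_le_one,
      intervalIntegral.integral_eq_sub_of_hasDerivAt (fun t _ => hline t)
        (hcont.intervalIntegrable 0 1)]
    simp
  calc ‖u (x + k) - u x‖ₑ
      ≤ ∫⁻ t in Ioc (0 : ℝ) 1, ‖fderiv ℝ u (x + t • k) k‖ₑ :=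
        hftc ▸ enorm_integral_le_lintegral_enorm _
    _ ≤ ∫⁻ t in Ioc (0 : ℝ) 1, ‖fderiv ℝ u (x + t • k)‖ₑ * ‖k‖ₑ :=
        lintegral_mono fun t => ContinuousLinearMap.le_opENorm _ _
    _ = ‖k‖ₑ * ∫⁻ t in Ioc (0 : ℝ) 1, ‖fderiv ℝ u (x + t • k)‖ₑ := by
        rw [lintegral_mul_const' _ _ enorm_ne_top, mul_comm]

variable [MeasurableSpace E] [BorelSpace E] [SecondCountableTopology E]
  {μ : Measure E} [SFinite μ] [μ.IsAddRightInvariant]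

theorem ContDiff.lintegral_enorm_translate_sub_rpow_le (hu : ContDiff ℝ 1 u) (k : E) {q : ℝ}
    (hq : 1 ≤ q) :
    ∫⁻ x, ‖u (x + k) - u x‖ₑ ^ q ∂μ ≤ ‖k‖ₑ ^ q * ∫⁻ x, ‖fderiv ℝ u x‖ₑ ^ q ∂μ := by
  have hq₀ : 0 ≤ q := by linarith
  have hG : Continuous fun y => ‖fderiv ℝ u y‖ₑ := (hu.continuous_fderiv one_ne_zero).enorm
  have : IsProbabilityMeasure (volume.restrict (Ioc (0 : ℝ) 1)) := ⟨by simp⟩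
  calc ∫⁻ x, ‖u (x + k) - u x‖ₑ ^ q ∂μ
      ≤ ∫⁻ x, ‖k‖ₑ ^ q * (∫⁻ t in Ioc (0 : ℝ) 1, ‖fderiv ℝ u (x + t • k)‖ₑ ^ q) ∂μ := by
        refine lintegral_mono fun x => ?_
        calc ‖u (x + k) - u x‖ₑ ^ q
            ≤ (‖k‖ₑ * ∫⁻ t in Ioc (0 : ℝ) 1, ‖fderiv ℝ u (x + t • k)‖ₑ) ^ q := by
              gcongr; exact hu.enorm_sub_le_mul_lintegral_enorm_fderiv x k
          _ = ‖k‖ₑ ^ q * (∫⁻ t in Ioc (0 : ℝ) 1, ‖fderiv ℝ u (x + t • k)‖ₑ) ^ q :=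
              ENNReal.mul_rpow_of_nonneg _ _ hq₀
          _ ≤ _ := by
              gcongr
              exact ENNReal.rpow_lintegral_le_lintegral_rpow_s4
                (hG.comp (by fun_prop)).aemeasurable hq
    _ = ‖k‖ₑ ^ q * ∫⁻ t in Ioc (0 : ℝ) 1, ∫⁻ x, ‖fderiv ℝ u (x + t • k)‖ₑ ^ q ∂μ := by
        rw [lintegral_const_mul' _ _ (ENNReal.rpow_ne_top_of_nonneg hq₀ enorm_ne_top),
          lintegral_lintegral_swap ((hG.measurable.comp (by fun_prop)).pow_const q).aemeasurable]
    _ = ‖k‖ₑ ^ q * ∫⁻ x, ‖fderiv ℝ u x‖ₑ ^ q ∂μ := by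
        simp [lintegral_add_right_eq_self (fun y => ‖fderiv ℝ u y‖ₑ ^ q)]

theorem ContDiff.eLpNorm_translate_sub_le (hu : ContDiff ℝ 1 u) (k : E) {p : ℝ≥0∞}
    (hp : 1 ≤ p) (hp' : p ≠ ∞) :
    eLpNorm (fun x => u (x + k) - u x) p μ ≤ ‖k‖ₑ * eLpNorm (fderiv ℝ u) p μ := by
  have hp₀ : p ≠ 0 := (one_pos.trans_le hp).ne'
  have hq : 1 ≤ p.toReal := ENNReal.toReal_mono hp' hp
  have hq₀ : 0 < p.toReal := one_pos.trans_le hq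
  rw [eLpNorm_eq_lintegral_rpow_enorm_toReal hp₀ hp',
    eLpNorm_eq_lintegral_rpow_enorm_toReal hp₀ hp']
  calc (∫⁻ x, ‖u (x + k) - u x‖ₑ ^ p.toReal ∂μ) ^ (1 / p.toReal)
      ≤ (‖k‖ₑ ^ p.toReal * ∫⁻ x, ‖fderiv ℝ u x‖ₑ ^ p.toReal ∂μ) ^ (1 / p.toReal) := by
        gcongr; exact hu.lintegral_enorm_translate_sub_rpow_le k hq
    _ = _ := by
        rw [ENNReal.mul_rpow_of_nonneg _ _ (by positivity), ← ENNReal.rpow_mul,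
          mul_one_div_cancel hq₀.ne', ENNReal.rpow_one]

end

section

variable {G F : Type*} [AddGroup G] [MeasurableSpace G] [MeasurableAdd G]
  {μ : Measure G} [μ.IsAddRightInvariant] [NormedAddCommGroup F] {p : ℝ≥0∞}

theorem eLpNorm_sub_comp_add_right_le_two_mul {g : G → F} (hg : AEStronglyMeasurable g μ) (h : G)
    (hp : 1 ≤ p) : eLpNorm (fun x => g x - g (x + h)) p μ ≤ 2 * eLpNorm g p μ := by
  have htrans := measurePreserving_add_right μ h
  calc eLpNorm (fun x => g x - g (x + h)) p μ
      ≤ eLpNorm g p μ + eLpNorm (g ∘ (· + h)) p μ :=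
        eLpNorm_sub_le hg (hg.comp_measurePreserving htrans) hp
    _ = 2 * eLpNorm g p μ := by rw [eLpNorm_comp_measurePreserving hg htrans, two_mul]

end

theorem eLpNorm_translate_sub_sub_le_two_mul_min {G F : Type*} [AddCommGroup G]
    [MeasurableSpace G] [MeasurableAdd G] {μ : Measure G} [μ.IsAddRightInvariant]
    [NormedAddCommGroup F] {p : ℝ≥0∞} {v : G → F} (hv : AEStronglyMeasurable v μ) (k h : G)
    (hp : 1 ≤ p) :
    eLpNorm (fun x => (v (x + k) - v (x + k + h)) - (v x - v (x + h))) p μ ≤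
      2 * min (eLpNorm (fun x => v (x + k) - v x) p μ)
        (eLpNorm (fun x => v (x + h) - v x) p μ) := by
  have htr (a : G) : AEStronglyMeasurable (fun x => v (x + a)) μ :=
    hv.comp_measurePreserving (measurePreserving_add_right μ a)
  rw [mul_min_of_nonneg _ _ zero_le]
  refine le_min ?_ ?_
  · calc _ = eLpNorm (fun x => (v (x + k) - v x) - (v (x + h + k) - v (x + h))) p μ := by
          congr 1; ext x; rw [add_right_comm]; abel
      _ ≤ _ := eLpNorm_sub_comp_add_right_le_two_mul ((htr k).sub hv) h hp
  · calc _ = eLpNorm (fun x => (v x - v (x + h)) - (v (x + k) - v (x + k + h))) p μ :=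
          eLpNorm_sub_comm _ _ _ _
      _ ≤ 2 * eLpNorm (fun x => v x - v (x + h)) p μ :=
          eLpNorm_sub_comp_add_right_le_two_mul (hv.sub (htr h)) k hp
      _ = _ := congrArg (2 * ·) (eLpNorm_sub_comm _ _ _ _)

theorem nikSeminorm_le_of_forall_eLpNorm_le {d : ℕ} {γ : ℝ} {p : ℝ≥0∞}
    {u : EuclideanSpace ℝ (Fin d) → ℝ} {C : ℝ≥0∞}
    (hC : ∀ k ≠ 0, eLpNorm (fun x => u (x + k) - u x) p volume ≤ C * ENNReal.ofReal (‖k‖ ^ γ)) :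
    nikSeminorm d γ p u ≤ C :=
  iSup₂_le fun k hk => ENNReal.div_le_of_le_mul (hC k hk)

theorem nikSeminorm_translate_diff_le_grad_general
    (d : ℕ) (γ₁ : ℝ) (hγ₁ : 0 < γ₁) (hγ₁' : γ₁ < 1)
    (u : EuclideanSpace ℝ (Fin d) → ℝ)
    (hu : ContDiff ℝ 1 u)
    (h : EuclideanSpace ℝ (Fin d)) :
    nikSeminorm d γ₁ 2 (fun x => u x - u (x + h)) ≤
      2 * ENNReal.ofReal (‖h‖ ^ (1 - γ₁)) *
        eLpNorm (fun x => ‖fderiv ℝ u x‖) 2 volume := by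
  rw [eLpNorm_norm]
  set N := eLpNorm (fderiv ℝ u) 2 volume
  have hΔ (k) : eLpNorm (fun x => u (x + k) - u x) 2 volume ≤ ‖k‖ₑ * N :=
    hu.eLpNorm_translate_sub_le k one_le_two ENNReal.ofNat_ne_top
  refine nikSeminorm_le_of_forall_eLpNorm_le fun k _ => ?_
  calc _ ≤ 2 * min (‖k‖ₑ * N) (‖h‖ₑ * N) :=
        (eLpNorm_translate_sub_sub_le_two_mul_min hu.continuous.aestronglyMeasurable k h
          one_le_two).trans (by gcongr <;> exact hΔ _)
    _ = 2 * ENNReal.ofReal (min ‖k‖ ‖h‖) * N := by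
        rw [mul_assoc, ENNReal.ofReal_min, ofReal_norm, ofReal_norm,
          min_mul_of_nonneg _ _ zero_le]
    _ ≤ 2 * ENNReal.ofReal (‖k‖ ^ γ₁ * ‖h‖ ^ (1 - γ₁)) * N := by
        gcongr
        exact Real.min_le_rpow_mul_rpow (norm_nonneg k) (norm_nonneg h) hγ₁.le hγ₁'.le
    _ = 2 * ENNReal.ofReal (‖h‖ ^ (1 - γ₁)) * N * ENNReal.ofReal (‖k‖ ^ γ₁) := by
        rw [ENNReal.ofReal_mul (by positivity)]; ring

/-- For `0 < γ₁ < 1`, `u : ℝ^d → ℝ` continuously differentiable with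
`u, |∇u| ∈ L²(ℝ^d)`, and `h ≠ 0`, one has
`[u − u_h]_{γ₁,2} ≤ 2 |h|^{1−γ₁} ‖|∇u|‖_{L²}`. -/
theorem nikSeminorm_translate_diff_le_grad
    (d : ℕ) (hd : 1 ≤ d) (γ₁ : ℝ) (hγ₁ : 0 < γ₁) (hγ₁' : γ₁ < 1)
    (u : EuclideanSpace ℝ (Fin d) → ℝ)
    (hu : ContDiff ℝ 1 u)
    (hu2 : MemLp u 2 volume)
    (hg2 : MemLp (fun x => ‖fderiv ℝ u x‖) 2 volume)
    (h : EuclideanSpace ℝ (Fin d)) (hh : h ≠ 0) :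
    nikSeminorm d γ₁ 2 (fun x => u x - u (x + h)) ≤
      2 * ENNReal.ofReal (‖h‖ ^ (1 - γ₁)) *
        eLpNorm (fun x => ‖fderiv ℝ u x‖) 2 volume :=
  nikSeminorm_translate_diff_le_grad_general d γ₁ hγ₁ hγ₁' u hu h
end

section
/- Let d ≥ 1, 0 < γ₁, 0 < γ₂ < 1, with γ₁ + γ₂ ≤ 1. There is a constant C depending only on d, γ₁, γ₂ with the following property: if u : ℝ^d → ℝ is continuously differentiable, u ∈ L²(ℝ^d), |∇u| ∈ L²(ℝ^d), and each partial derivative ∂_i u has finite Nikolskii seminorm [∂_i u]_{γ₂,2}, then for every h ∈ ℝ^d, h ≠ 0, the function u − u_h satisfies [u − u_h]_{1−γ₁,2} ≤ C · |h|^{γ₁ + γ₂} · ( ‖u‖_{L²(ℝ^d)} + ‖ |∇u| ‖_{L²(ℝ^d)} + Σ_{i=1}^d [∂_i u]_{γ₂,2} ). -/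
open MeasureTheory
open scoped ENNReal

/-! With `Δ_k v = v(· + k) - v`, the quantity to bound is the `L^p` norm of the second difference
`Δ_k Δ_h u`, which is symmetric in `h` and `k`. Averaging the fundamental theorem of calculus
along the segment `[x, x + h]` and using Jensen's inequality and translation invariance gives
`‖Δ_h v‖_p ≤ |h| ‖∇v‖_p`; applied to `v = Δ_k u`, together with `‖Δ_k ∇u‖_p ≤ |k|^{γ₂} S` where
`S = Σᵢ [∂ᵢu]_{γ₂,p}`, this bounds `‖Δ_k Δ_h u‖_p` both by `|h| |k|^{γ₂} S` and by
`|k| |h|^{γ₂} S`. Whichever of `|h|`, `|k|` is smaller, one of these two is at most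
`|h|^{γ₁+γ₂} |k|^{1-γ₁} S`, since `γ₁ ≥ 0` and `γ₁ + γ₂ ≤ 1`. -/

open Set Function

theorem mul_rpow_le_rpow_mul_rpow {x y θ : ℝ} (hx : 0 < x) (hxy : x ≤ y) (hθ : 0 ≤ θ) (p : ℝ) :
    x * y ^ p ≤ x ^ (1 - θ) * y ^ (p + θ) := by
  have hy : 0 < y := hx.trans_le hxy
  calc x * y ^ p = x ^ (1 - θ) * x ^ θ * y ^ p := by
        rw [← Real.rpow_add hx, sub_add_cancel, Real.rpow_one]
    _ ≤ x ^ (1 - θ) * y ^ θ * y ^ p := by gcongr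
    _ = x ^ (1 - θ) * y ^ (p + θ) := by rw [Real.rpow_add hy]; ring

theorem min_mul_rpow_le_rpow_mul_rpow {a b γ₁ γ₂ : ℝ} (ha : 0 < a) (hb : 0 < b) (hγ₁ : 0 ≤ γ₁)
    (hsum : γ₁ + γ₂ ≤ 1) :
    min (a * b ^ γ₂) (b * a ^ γ₂) ≤ a ^ (γ₁ + γ₂) * b ^ (1 - γ₁) := by
  rcases le_total a b with hab | hba
  · refine (min_le_left _ _).trans ?_
    refine (mul_rpow_le_rpow_mul_rpow ha hab (sub_nonneg.2 hsum) γ₂).trans_eq ?_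
    congr 2 <;> ring
  · refine (min_le_right _ _).trans ?_
    refine (mul_rpow_le_rpow_mul_rpow hb hba hγ₁ γ₂).trans_eq ?_
    rw [add_comm γ₂, mul_comm]

theorem norm_le_sum_norm_apply_single {d : ℕ} {F : Type*} [SeminormedAddCommGroup F]
    [NormedSpace ℝ F] (f : EuclideanSpace ℝ (Fin d) →L[ℝ] F) :
    ‖f‖ ≤ ∑ i, ‖f (EuclideanSpace.single i 1)‖ := by
  refine f.opNorm_le_bound (by positivity) fun x => ?_
  have hx : x = ∑ i, x i • EuclideanSpace.single i (1 : ℝ) := by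
    simpa using ((EuclideanSpace.basisFun (Fin d) ℝ).sum_repr x).symm
  calc ‖f x‖ = ‖∑ i, x i • f (EuclideanSpace.single i 1)‖ := by
        conv_lhs => rw [hx]
        simp only [map_sum, map_smul]
    _ ≤ ∑ i, ‖f (EuclideanSpace.single i 1)‖ * ‖x‖ := by
        refine norm_sum_le_of_le _ fun i _ => ?_
        rw [norm_smul, mul_comm]
        gcongr
        exact PiLp.norm_apply_le x i
    _ = (∑ i, ‖f (EuclideanSpace.single i 1)‖) * ‖x‖ := (Finset.sum_mul _ _ _).symm

section Average

variable {α β : Type*} [MeasurableSpace α] [MeasurableSpace β] {μ : Measure α} [SFinite μ]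
  {ν : Measure β} [IsProbabilityMeasure ν]

theorem eLpNorm_lintegral_le_of_forall_eLpNorm_le {p : ℝ≥0∞} (hp1 : 1 ≤ p) (hp : p ≠ ∞)
    {F : β → α → ℝ≥0∞} (hF : Measurable (uncurry F)) {C : ℝ≥0∞}
    (hC : ∀ t, eLpNorm (F t) p μ ≤ C) :
    eLpNorm (fun x => ∫⁻ t, F t x ∂ν) p μ ≤ C := by
  have hp0 : p ≠ 0 := (zero_lt_one.trans_le hp1).ne'
  have hq : 0 < p.toReal := ENNReal.toReal_pos hp0 hp
  simp only [eLpNorm_eq_lintegral_rpow_enorm_toReal hp0 hp, enorm_eq_self, one_div,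
    ENNReal.rpow_inv_le_iff hq] at hC ⊢
  have jensen : ∀ x, (∫⁻ t, F t x ∂ν) ^ p.toReal ≤ ∫⁻ t, F t x ^ p.toReal ∂ν := by
    intro x
    have h := eLpNorm_le_eLpNorm_of_exponent_le hp1
      (hF.comp (measurable_prodMk_right (y := x))).aemeasurable.aestronglyMeasurable (μ := ν)
    simpa only [eLpNorm_one_eq_lintegral_enorm, eLpNorm_eq_lintegral_rpow_enorm_toReal hp0 hp,
      comp_apply, uncurry_apply_pair, enorm_eq_self, one_div, ENNReal.le_rpow_inv_iff hq] using h
  calc ∫⁻ x, (∫⁻ t, F t x ∂ν) ^ p.toReal ∂μ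
      ≤ ∫⁻ x, ∫⁻ t, F t x ^ p.toReal ∂ν ∂μ := lintegral_mono jensen
    _ = ∫⁻ t, ∫⁻ x, F t x ^ p.toReal ∂μ ∂ν :=
      lintegral_lintegral_swap ((hF.comp measurable_swap).pow_const _).aemeasurable
    _ ≤ ∫⁻ _, C ^ p.toReal ∂ν := lintegral_mono hC
    _ = C ^ p.toReal := by simp

end Average

section Translate

variable {E F : Type*} [NormedAddCommGroup E] [NormedSpace ℝ E] [NormedAddCommGroup F]
  [NormedSpace ℝ F]

theorem enorm_sub_le_lintegral_fderiv_apply {v : E → F} (hv : ContDiff ℝ 1 v) (x h : E) :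
    ‖v (x + h) - v x‖ₑ ≤ ∫⁻ t in Icc (0 : ℝ) 1, ‖fderiv ℝ v (x + t • h) h‖ₑ := by
  have hderiv : ∀ t : ℝ, HasDerivAt (fun s : ℝ => v (x + s • h)) (fderiv ℝ v (x + t • h) h) t :=
    fun t => (hv.differentiable one_ne_zero _).hasFDerivAt.comp_hasDerivAt t
      (((hasDerivAt_id t).smul_const h).const_add x |>.congr_deriv (one_smul ℝ h))
  have hline : ContDiff ℝ 1 (fun s : ℝ => v (x + s • h)) := hv.comp (by fun_prop)
  simpa [fun t => (hderiv t).deriv] using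
    enorm_sub_le_lintegral_deriv_of_contDiffOn_Icc hline.contDiffOn zero_le_one

variable [MeasurableSpace E] [BorelSpace E] [SecondCountableTopology E] {μ : Measure E} [SFinite μ]
  [μ.IsAddRightInvariant]

theorem eLpNorm_sub_comp_add_right_le {v : E → F} (hv : ContDiff ℝ 1 v) {p : ℝ≥0∞}
    (hp1 : 1 ≤ p) (hp : p ≠ ∞) (h : E) :
    eLpNorm (fun x => v (x + h) - v x) p μ ≤ ‖h‖ₑ * eLpNorm (fderiv ℝ v) p μ := by
  have hDv : Continuous fun y => fderiv ℝ v y h :=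
    (hv.continuous_fderiv one_ne_zero).clm_apply continuous_const
  have : IsProbabilityMeasure (volume.restrict (Icc (0 : ℝ) 1)) := ⟨by simp⟩
  calc eLpNorm (fun x => v (x + h) - v x) p μ
      ≤ eLpNorm (fun x => ∫⁻ t in Icc (0 : ℝ) 1, ‖fderiv ℝ v (x + t • h) h‖ₑ) p μ :=
        eLpNorm_mono_enorm fun x => by
          simpa only [enorm_eq_self] using enorm_sub_le_lintegral_fderiv_apply hv x h
    _ ≤ eLpNorm (fun y => fderiv ℝ v y h) p μ := by
        refine eLpNorm_lintegral_le_of_forall_eLpNorm_le hp1 hp ?_ fun t => ?_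
        · exact (hDv.comp (by fun_prop)).enorm.measurable
        · rw [← eLpNorm_enorm (fun y => fderiv ℝ v y h)]
          exact (eLpNorm_comp_measurePreserving hDv.enorm.aestronglyMeasurable
            (measurePreserving_add_right μ (t • h))).le
    _ ≤ ‖h‖ₑ * eLpNorm (fderiv ℝ v) p μ :=
        eLpNorm_le_mul_eLpNorm_of_ae_le_mul' (c := ‖h‖₊) (.of_forall fun y => by
          simpa only [enorm_eq_nnnorm, ← ENNReal.coe_mul, ENNReal.coe_le_coe, mul_comm]
            using (fderiv ℝ v y).le_opNNNorm h) p

theorem eLpNorm_second_difference_le {u : E → F} (hu : ContDiff ℝ 1 u) {p : ℝ≥0∞}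
    (hp1 : 1 ≤ p) (hp : p ≠ ∞) (h k : E) :
    eLpNorm (fun x => u (x + h + k) - u (x + h) - (u (x + k) - u x)) p μ ≤
      ‖h‖ₑ * eLpNorm (fun x => fderiv ℝ u (x + k) - fderiv ℝ u x) p μ := by
  have hdiff := hu.differentiable one_ne_zero
  have hfderiv :
      fderiv ℝ (fun x => u (x + k) - u x) = fun x => fderiv ℝ u (x + k) - fderiv ℝ u x := by
    funext x
    exact (((hasFDerivAt_comp_add_right k).2 (hdiff (x + k)).hasFDerivAt).sub
      (hdiff x).hasFDerivAt).fderiv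
  have hv : ContDiff ℝ 1 (fun x => u (x + k) - u x) := (hu.comp (by fun_prop)).sub hu
  have := eLpNorm_sub_comp_add_right_le (μ := μ) hv hp1 hp h
  rwa [hfderiv] at this

end Translate

section Nikolskii

variable {d : ℕ}

theorem eLpNorm_sub_comp_add_right_le_nikSeminorm_mul {γ : ℝ} {p : ℝ≥0∞}
    (u : EuclideanSpace ℝ (Fin d) → ℝ) {k : EuclideanSpace ℝ (Fin d)} (hk : k ≠ 0) :
    eLpNorm (fun x => u (x + k) - u x) p volume ≤
      nikSeminorm d γ p u * ENNReal.ofReal (‖k‖ ^ γ) := by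
  have hk' : ENNReal.ofReal (‖k‖ ^ γ) ≠ 0 := by
    simpa using Real.rpow_pos_of_pos (norm_pos_iff.2 hk) γ
  rw [← ENNReal.div_le_iff hk' ENNReal.ofReal_ne_top]
  exact le_iSup₂ (f := fun k (_ : k ≠ 0) =>
    eLpNorm (fun x => u (x + k) - u x) p volume / ENNReal.ofReal (‖k‖ ^ γ)) k hk

theorem eLpNorm_fderiv_sub_comp_add_right_le {u : EuclideanSpace ℝ (Fin d) → ℝ}
    (hu : ContDiff ℝ 1 u) {γ : ℝ} {p : ℝ≥0∞} (hp1 : 1 ≤ p) {k : EuclideanSpace ℝ (Fin d)}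
    (hk : k ≠ 0) :
    eLpNorm (fun x => fderiv ℝ u (x + k) - fderiv ℝ u x) p volume ≤
      (∑ i, nikSeminorm d γ p (fun x => fderiv ℝ u x (EuclideanSpace.single i 1))) *
        ENNReal.ofReal (‖k‖ ^ γ) := by
  have hDu := hu.continuous_fderiv one_ne_zero
  set e : Fin d → EuclideanSpace ℝ (Fin d) := fun i => EuclideanSpace.single i 1
  calc eLpNorm (fun x => fderiv ℝ u (x + k) - fderiv ℝ u x) p volume
      ≤ eLpNorm (∑ i, fun x => ‖fderiv ℝ u (x + k) (e i) - fderiv ℝ u x (e i)‖) p volume := by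
        refine eLpNorm_mono_real fun x => ?_
        simpa [Finset.sum_apply] using
          norm_le_sum_norm_apply_single (fderiv ℝ u (x + k) - fderiv ℝ u x)
    _ ≤ ∑ i, eLpNorm (fun x => ‖fderiv ℝ u (x + k) (e i) - fderiv ℝ u x (e i)‖) p volume :=
        eLpNorm_sum_le (fun i _ => (((hDu.comp (by fun_prop)).clm_apply continuous_const).sub
          (hDu.clm_apply continuous_const)).norm.aestronglyMeasurable) hp1
    _ ≤ ∑ i, nikSeminorm d γ p (fun x => fderiv ℝ u x (e i)) * ENNReal.ofReal (‖k‖ ^ γ) := by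
        simp only [eLpNorm_norm]
        exact Finset.sum_le_sum fun i _ =>
          eLpNorm_sub_comp_add_right_le_nikSeminorm_mul (fun x => fderiv ℝ u x (e i)) hk
    _ = _ := (Finset.sum_mul _ _ _).symm

theorem nikSeminorm_sub_comp_add_right_le {u : EuclideanSpace ℝ (Fin d) → ℝ}
    (hu : ContDiff ℝ 1 u) {p : ℝ≥0∞} (hp1 : 1 ≤ p) (hp : p ≠ ∞) {γ₁ γ₂ : ℝ} (hγ₁ : 0 ≤ γ₁)
    (hsum : γ₁ + γ₂ ≤ 1) {h : EuclideanSpace ℝ (Fin d)} (hh : h ≠ 0) :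
    nikSeminorm d (1 - γ₁) p (fun x => u x - u (x + h)) ≤
      ENNReal.ofReal (‖h‖ ^ (γ₁ + γ₂)) *
        ∑ i, nikSeminorm d γ₂ p (fun x => fderiv ℝ u x (EuclideanSpace.single i 1)) := by
  set S := ∑ i, nikSeminorm d γ₂ p (fun x => fderiv ℝ u x (EuclideanSpace.single i 1))
  have second_difference_le : ∀ a b : EuclideanSpace ℝ (Fin d), b ≠ 0 →
      eLpNorm (fun x => u (x + a + b) - u (x + a) - (u (x + b) - u x)) p volume ≤
        ENNReal.ofReal (‖a‖ * ‖b‖ ^ γ₂) * S := fun a b hb => by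
    rw [ENNReal.ofReal_mul (norm_nonneg a), ofReal_norm, mul_assoc, mul_comm (ENNReal.ofReal _)]
    exact (eLpNorm_second_difference_le hu hp1 hp a b).trans
      (by gcongr; exact eLpNorm_fderiv_sub_comp_add_right_le hu hp1 hb)
  refine iSup₂_le fun k hk => ?_
  have hkpos := norm_pos_iff.2 hk
  rw [ENNReal.div_le_iff (by simpa using Real.rpow_pos_of_pos hkpos _) ENNReal.ofReal_ne_top,
    mul_right_comm, ← ENNReal.ofReal_mul (by positivity)]
  have hneg : (fun x => u (x + k) - u (x + k + h) - (u x - u (x + h))) =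
      -fun x => u (x + h + k) - u (x + h) - (u (x + k) - u x) := by
    funext x
    simp only [Pi.neg_apply, add_right_comm x h k]
    ring
  have hswap : (fun x => u (x + h + k) - u (x + h) - (u (x + k) - u x)) =
      fun x => u (x + k + h) - u (x + k) - (u (x + h) - u x) := by
    funext x
    rw [add_right_comm x h k]
    ring
  rw [hneg, eLpNorm_neg]
  rcases min_le_iff.1 (min_mul_rpow_le_rpow_mul_rpow (norm_pos_iff.2 hh) hkpos hγ₁ hsum) with H | H
  · exact (second_difference_le h k hk).trans (by gcongr)
  · rw [hswap]
    exact (second_difference_le k h hh).trans (by gcongr)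

end Nikolskii

theorem nikSeminorm_translate_diff_le_of_deriv_nik_general
    (d : ℕ) (γ₁ γ₂ : ℝ) (hγ₁ : 0 < γ₁)
    (hsum : γ₁ + γ₂ ≤ 1) :
    ∃ C : ℝ, 0 < C ∧
      ∀ u : EuclideanSpace ℝ (Fin d) → ℝ,
        ContDiff ℝ 1 u →
        MemLp u 2 volume →
        MemLp (fun x => ‖fderiv ℝ u x‖) 2 volume →
        (∀ i : Fin d,
          nikSeminorm d γ₂ 2 (fun x => fderiv ℝ u x (EuclideanSpace.single i 1)) ≠ ⊤) →
        ∀ h : EuclideanSpace ℝ (Fin d), h ≠ 0 →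
          nikSeminorm d (1 - γ₁) 2 (fun x => u x - u (x + h)) ≤
            ENNReal.ofReal (C * ‖h‖ ^ (γ₁ + γ₂)) *
              (eLpNorm u 2 volume + eLpNorm (fun x => ‖fderiv ℝ u x‖) 2 volume +
                ∑ i : Fin d,
                  nikSeminorm d γ₂ 2 (fun x => fderiv ℝ u x (EuclideanSpace.single i 1))) := by
  refine ⟨1, one_pos, fun u hu _ _ _ h hh => ?_⟩
  rw [one_mul]
  exact (nikSeminorm_sub_comp_add_right_le hu one_le_two ENNReal.ofNat_ne_top hγ₁.le hsum hh).trans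
    (by gcongr; exact le_add_self)

/-- For `0 < γ₁`, `0 < γ₂ < 1`, `γ₁ + γ₂ ≤ 1`, there is a constant
`C = C(d, γ₁, γ₂)` such that for `u` continuously differentiable with `u, |∇u| ∈ L²`
and `[∂ᵢu]_{γ₂,2} < ∞` for each `i`, and every `h ≠ 0`:
`[u − u_h]_{1−γ₁,2} ≤ C |h|^{γ₁+γ₂} (‖u‖_{L²} + ‖|∇u|‖_{L²} + Σᵢ [∂ᵢu]_{γ₂,2})`. -/
theorem nikSeminorm_translate_diff_le_of_deriv_nik
    (d : ℕ) (hd : 1 ≤ d) (γ₁ γ₂ : ℝ) (hγ₁ : 0 < γ₁) (hγ₂ : 0 < γ₂) (hγ₂' : γ₂ < 1)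
    (hsum : γ₁ + γ₂ ≤ 1) :
    ∃ C : ℝ, 0 < C ∧
      ∀ u : EuclideanSpace ℝ (Fin d) → ℝ,
        ContDiff ℝ 1 u →
        MemLp u 2 volume →
        MemLp (fun x => ‖fderiv ℝ u x‖) 2 volume →
        (∀ i : Fin d,
          nikSeminorm d γ₂ 2 (fun x => fderiv ℝ u x (EuclideanSpace.single i 1)) ≠ ⊤) →
        ∀ h : EuclideanSpace ℝ (Fin d), h ≠ 0 →
          nikSeminorm d (1 - γ₁) 2 (fun x => u x - u (x + h)) ≤
            ENNReal.ofReal (C * ‖h‖ ^ (γ₁ + γ₂)) *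
              (eLpNorm u 2 volume + eLpNorm (fun x => ‖fderiv ℝ u x‖) 2 volume +
                ∑ i : Fin d,
                  nikSeminorm d γ₂ 2 (fun x => fderiv ℝ u x (EuclideanSpace.single i 1))) :=
  nikSeminorm_translate_diff_le_of_deriv_nik_general d γ₁ γ₂ hγ₁ hsum
end

section
/- Let d ≥ 1, 1 ≤ p₀ ≤ p₁ ≤ ∞, 0 < s₁ ≤ s₀ < 1, and suppose s₀ − d/p₀ = s₁ − d/p₁ (with the convention d/∞ = 0). There is a constant C depending only on d, p₀, p₁, s₀, s₁ such that every u ∈ L^{p₀}(ℝ^d) with finite Nikolskii seminorm [u]_{s₀,p₀} belongs to L^{p₁}(ℝ^d), has finite seminorm [u]_{s₁,p₁}, and satisfies ‖u‖_{L^{p₁}(ℝ^d)} + [u]_{s₁,p₁} ≤ C · ( ‖u‖_{L^{p₀}(ℝ^d)} + [u]_{s₀,p₀} ). -/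
open MeasureTheory
open scoped ENNReal

/-!
Let `A_t u (x)` be the average of `u` over the ball `B(x, t)` and `δ = 1/p₀ - 1/p₁`. By Hölder and
interpolation between `L^{p₀}` and `L^∞`, `A_t` maps `L^{p₀}` to `L^{p₁}` with norm at most
`|B_t|^{-δ} ~ t^{-dδ} = t^{s₁ - s₀}`, and Minkowski's inequality gives
`‖A_t u - u‖_{p₀} ≤ [u]_{s₀,p₀} t^{s₀}`. Since ball averages commute,
`A_{t/2} u - A_t u = A_{t/2}(u - A_t u) + A_t(A_{t/2} u - u)`, so consecutive dyadic averages
differ by `O(t^{s₁})` in `L^{p₁}`; summing the geometric series and using Lebesgue's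
differentiation theorem, `‖u - A_t u‖_{p₁} = O(t^{s₁})`. Taking `t = 1` bounds `‖u‖_{p₁}`, and
taking `t = |k|` in `u_k - u = (u - A_t u)_k - (u - A_t u) + A_t(u_k - u)` bounds `[u]_{s₁,p₁}`.
-/

open Metric Filter Module
open scoped Topology

section LpBounds

variable {α β F : Type*} [MeasurableSpace α] [MeasurableSpace β] [NormedAddCommGroup F]

theorem ENNReal.one_div_toReal_le_one_div_toReal {p q : ℝ≥0∞} (hp : p ≠ 0) (hpq : p ≤ q) :
    1 / q.toReal ≤ 1 / p.toReal := by
  simpa [ENNReal.toReal_inv] using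
    ENNReal.toReal_mono (ENNReal.inv_ne_top.2 hp) (ENNReal.inv_le_inv.2 hpq)

theorem rpow_lintegral_le_mul_lintegral_rpow (ν : Measure β) {f : β → ℝ≥0∞}
    (hf : AEMeasurable f ν) {p : ℝ} (hp : 1 ≤ p) :
    (∫⁻ b, f b ∂ν) ^ p ≤ ν Set.univ ^ (p - 1) * ∫⁻ b, f b ^ p ∂ν := by
  rcases hp.eq_or_lt with rfl | hp
  · simp
  have hpq : p.HolderConjugate (Real.conjExponent p) := .conjExponent hp
  have hexp : p / Real.conjExponent p = p - 1 := by
    rw [Real.conjExponent]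
    field_simp
  have hHolder := ENNReal.lintegral_mul_le_Lp_mul_Lq ν hpq hf aemeasurable_const (g := 1)
  simp only [Pi.mul_apply, Pi.one_apply, mul_one, ENNReal.one_rpow, lintegral_const,
    one_mul] at hHolder
  calc (∫⁻ b, f b ∂ν) ^ p
      ≤ ((∫⁻ b, f b ^ p ∂ν) ^ (1 / p) * ν Set.univ ^ (1 / Real.conjExponent p)) ^ p := by
        gcongr
    _ = ν Set.univ ^ (p - 1) * ∫⁻ b, f b ^ p ∂ν := by
        rw [ENNReal.mul_rpow_of_nonneg _ _ (by linarith), ← ENNReal.rpow_mul, ← ENNReal.rpow_mul,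
          one_div_mul_cancel hpq.ne_zero, ENNReal.rpow_one, one_div_mul_eq_div, hexp, mul_comm]

theorem lintegral_rpow_enorm_le_of_eLpNorm_le {μ : Measure α} {f : α → F} {p : ℝ≥0∞}
    (hp : p ≠ 0) (hp_top : p ≠ ⊤) {C : ℝ≥0∞} (h : eLpNorm f p μ ≤ C) :
    ∫⁻ x, ‖f x‖ₑ ^ p.toReal ∂μ ≤ C ^ p.toReal := by
  have hpos := ENNReal.toReal_pos hp hp_top
  rw [lintegral_rpow_enorm_eq_rpow_eLpNorm' hpos, ← eLpNorm_eq_eLpNorm' hp hp_top]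
  gcongr

theorem enorm_average_le [NormedSpace ℝ F] (ν : Measure β) (f : β → F) :
    ‖⨍ b, f b ∂ν‖ₑ ≤ (ν Set.univ)⁻¹ * ∫⁻ b, ‖f b‖ₑ ∂ν := by
  rw [average_eq, enorm_smul]
  gcongr
  · rw [Real.enorm_eq_ofReal (by positivity), measureReal_def, ← ENNReal.toReal_inv]
    exact ENNReal.ofReal_toReal_le
  · exact enorm_integral_le_lintegral_enorm _

theorem eLpNorm_average_le [NormedSpace ℝ F] {μ : Measure α} [SFinite μ] {ν : Measure β}
    [IsFiniteMeasure ν] (hν : ν ≠ 0) {p : ℝ≥0∞} (hp : 1 ≤ p) (hp_top : p ≠ ⊤) {g : α → β → F}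
    (hg : StronglyMeasurable (Function.uncurry g)) {C : ℝ≥0∞}
    (hC : ∀ᵐ h ∂ν, eLpNorm (fun x => g x h) p μ ≤ C) :
    eLpNorm (fun x => ⨍ h, g x h ∂ν) p μ ≤ C := by
  have hp0 : p ≠ 0 := (zero_lt_one.trans_le hp).ne'
  set r := p.toReal
  have hr : 1 ≤ r := by simpa using ENNReal.toReal_mono hp_top hp
  set V := ν Set.univ
  have hV0 : V ≠ 0 := Measure.measure_univ_ne_zero.2 hν
  have hVtop : V ≠ ⊤ := measure_ne_top ν _
  have hpointwise :
      ∀ x, ‖⨍ h, g x h ∂ν‖ₑ ^ r ≤ (V⁻¹ ^ r * V ^ (r - 1)) * ∫⁻ h, ‖g x h‖ₑ ^ r ∂ν := by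
    intro x
    calc ‖⨍ h, g x h ∂ν‖ₑ ^ r ≤ (V⁻¹ * ∫⁻ h, ‖g x h‖ₑ ∂ν) ^ r := by
          gcongr
          exact enorm_average_le ν _
      _ ≤ V⁻¹ ^ r * (V ^ (r - 1) * ∫⁻ h, ‖g x h‖ₑ ^ r ∂ν) := by
        rw [ENNReal.mul_rpow_of_nonneg _ _ (by positivity)]
        gcongr
        exact rpow_lintegral_le_mul_lintegral_rpow ν
          (hg.comp_measurable measurable_prodMk_left).enorm.aemeasurable hr
      _ = _ := by ring
  have hconst : V⁻¹ ^ r * V ^ (r - 1) * (C ^ r * V) = C ^ r := by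
    rw [mul_comm (C ^ r), ← mul_assoc, mul_assoc _ _ V, ENNReal.rpow_sub _ _ hV0 hVtop,
      ENNReal.rpow_one, ENNReal.div_mul_cancel hV0 hVtop, ← ENNReal.mul_rpow_of_nonneg _ _
      (by positivity), ENNReal.inv_mul_cancel hV0 hVtop, ENNReal.one_rpow, one_mul]
  have hlintegral : ∫⁻ x, ‖⨍ h, g x h ∂ν‖ₑ ^ r ∂μ ≤ C ^ r :=
    calc ∫⁻ x, ‖⨍ h, g x h ∂ν‖ₑ ^ r ∂μ
        ≤ ∫⁻ x, (V⁻¹ ^ r * V ^ (r - 1)) * ∫⁻ h, ‖g x h‖ₑ ^ r ∂ν ∂μ := lintegral_mono hpointwise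
      _ = (V⁻¹ ^ r * V ^ (r - 1)) * ∫⁻ h, ∫⁻ x, ‖g x h‖ₑ ^ r ∂μ ∂ν := by
        rw [lintegral_const_mul' _ _ (by finiteness), lintegral_lintegral_swap
          (hg.enorm.pow_const _).aemeasurable]
      _ ≤ (V⁻¹ ^ r * V ^ (r - 1)) * ∫⁻ _, C ^ r ∂ν := by
        refine mul_le_mul' le_rfl (lintegral_mono_ae ?_)
        exact hC.mono fun h hh => lintegral_rpow_enorm_le_of_eLpNorm_le hp0 hp_top hh
      _ = C ^ r := by rw [lintegral_const, hconst]
  rw [eLpNorm_eq_lintegral_rpow_enorm_toReal hp0 hp_top]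
  calc (∫⁻ x, ‖⨍ h, g x h ∂ν‖ₑ ^ r ∂μ) ^ (1 / r) ≤ (C ^ r) ^ (1 / r) := by gcongr
    _ = C := by rw [← ENNReal.rpow_mul, mul_one_div_cancel (by positivity), ENNReal.rpow_one]

theorem eLpNorm_le_eLpNorm_top_rpow_mul_eLpNorm_rpow {μ : Measure α} {f : α → F}
    (hf : AEStronglyMeasurable f μ) {p q : ℝ≥0∞} (hp : p ≠ 0) (hpq : p ≤ q) (hq : q ≠ ⊤) :
    eLpNorm f q μ ≤
      eLpNorm f ⊤ μ ^ (1 - p.toReal / q.toReal) * eLpNorm f p μ ^ (p.toReal / q.toReal) := by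
  have hp_top : p ≠ ⊤ := ne_top_of_le_ne_top hq hpq
  have hq0 : q ≠ 0 := (hp.bot_lt.trans_le hpq).ne'
  set r := p.toReal
  set s := q.toReal
  have hr : 0 < r := ENNReal.toReal_pos hp hp_top
  have hs : 0 < s := ENNReal.toReal_pos hq0 hq
  have hrs : r ≤ s := ENNReal.toReal_mono hq hpq
  set L := eLpNorm f ⊤ μ
  have hpointwise : ∀ᵐ x ∂μ, ‖f x‖ₑ ^ s ≤ L ^ (s - r) * ‖f x‖ₑ ^ r := by
    filter_upwards [enorm_ae_le_eLpNormEssSup f μ] with x hx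
    calc ‖f x‖ₑ ^ s = ‖f x‖ₑ ^ (s - r) * ‖f x‖ₑ ^ r := by
          rw [← ENNReal.rpow_add_of_nonneg _ _ (by linarith) hr.le, sub_add_cancel]
      _ ≤ L ^ (s - r) * ‖f x‖ₑ ^ r := by
          gcongr
          exact hx.trans_eq eLpNorm_exponent_top.symm
  have hlintegral : ∫⁻ x, ‖f x‖ₑ ^ s ∂μ ≤ L ^ (s - r) * ∫⁻ x, ‖f x‖ₑ ^ r ∂μ := by
    rw [← lintegral_const_mul'' _ (hf.enorm.pow_const r)]
    exact lintegral_mono_ae hpointwise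
  rw [eLpNorm_eq_lintegral_rpow_enorm_toReal hq0 hq,
    eLpNorm_eq_lintegral_rpow_enorm_toReal hp hp_top]
  calc (∫⁻ x, ‖f x‖ₑ ^ s ∂μ) ^ (1 / s)
      ≤ (L ^ (s - r) * ∫⁻ x, ‖f x‖ₑ ^ r ∂μ) ^ (1 / s) := by gcongr
    _ = L ^ (1 - r / s) * ((∫⁻ x, ‖f x‖ₑ ^ r ∂μ) ^ (1 / r)) ^ (r / s) := by
        rw [ENNReal.mul_rpow_of_nonneg _ _ (by positivity), ← ENNReal.rpow_mul, ← ENNReal.rpow_mul]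
        congr 2 <;> field_simp

theorem eLpNorm_sub_le_tsum_eLpNorm_sub {μ : Measure α} {p : ℝ≥0∞} (hp : 1 ≤ p)
    {f : ℕ → α → F} {g : α → F} (hf : ∀ n, AEStronglyMeasurable (f n) μ)
    (hlim : ∀ᵐ x ∂μ, Tendsto (fun n => f n x) atTop (𝓝 (g x))) :
    eLpNorm (g - f 0) p μ ≤ ∑' n, eLpNorm (f (n + 1) - f n) p μ := by
  have hpartial : ∀ n, eLpNorm (f n - f 0) p μ ≤ ∑' n, eLpNorm (f (n + 1) - f n) p μ := by
    intro n
    rw [← Finset.sum_range_sub]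
    exact (eLpNorm_sum_le (fun j _ => (hf (j + 1)).sub (hf j)) hp).trans (ENNReal.sum_le_tsum _)
  refine (Lp.eLpNorm_lim_le_liminf_eLpNorm (fun n => (hf n).sub (hf 0)) _
    (hlim.mono fun x hx => hx.sub_const (f 0 x))).trans ?_
  exact liminf_le_of_le (by isBoundedDefault) fun b hb => hb.exists.choose_spec.trans (hpartial _)

end LpBounds

section Translation

variable {G F : Type*} [AddGroup G] [MeasurableSpace G] [MeasurableAdd G] [NormedAddCommGroup F]
  (μ : Measure G) [μ.IsAddRightInvariant]

theorem eLpNorm_comp_add_right {u : G → F}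
    (hu : AEStronglyMeasurable u μ) (k : G) (p : ℝ≥0∞) :
    eLpNorm (fun x => u (x + k)) p μ = eLpNorm u p μ :=
  eLpNorm_comp_measurePreserving hu (measurePreserving_add_right μ k)

theorem eLpNorm_comp_add_right_sub_congr_ae {u w : G → F}
    (hae : u =ᵐ[μ] w) (k : G) (p : ℝ≥0∞) :
    eLpNorm (fun x => u (x + k) - u x) p μ = eLpNorm (fun x => w (x + k) - w x) p μ :=
  eLpNorm_congr_ae
    (((measurePreserving_add_right μ k).quasiMeasurePreserving.ae_eq_comp hae).sub hae)

theorem eLpNorm_comp_add_right_sub_le_s6 {p : ℝ≥0∞} (hp : 1 ≤ p) {u : G → F}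
    (hu : AEStronglyMeasurable u μ) (k : G) :
    eLpNorm (fun x => u (x + k) - u x) p μ ≤ 2 * eLpNorm u p μ := by
  calc _ ≤ eLpNorm (fun x => u (x + k)) p μ + eLpNorm u p μ :=
        eLpNorm_sub_le (hu.comp_measurePreserving (measurePreserving_add_right μ k)) hu hp
    _ = 2 * eLpNorm u p μ := by rw [eLpNorm_comp_add_right μ hu k p, two_mul]

end Translation

section BallAverage

variable {E : Type*} [NormedAddCommGroup E] [MeasurableSpace E]

/-- The average of `u` over `closedBall x t` (`ballAverage_eq_setAverage`), written with the
integrand translated so that every average is taken against `μ.restrict (closedBall 0 t)`. -/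
noncomputable def ballAverage (μ : Measure E) (t : ℝ) (u : E → ℝ) (x : E) : ℝ :=
  ⨍ h in closedBall (0 : E) t, u (x + h) ∂μ

variable {μ : Measure E}

theorem ballAverage_comp_add_right (t : ℝ) (u : E → ℝ) (k x : E) :
    ballAverage μ t (fun y => u (y + k)) x = ballAverage μ t u (x + k) := by
  simp only [ballAverage, add_right_comm]

variable (μ) [μ.IsAddHaarMeasure]

theorem restrict_closedBall_ne_zero (x : E) {t : ℝ} (ht : 0 < t) :
    μ.restrict (closedBall x t) ≠ 0 :=
  Measure.restrict_eq_zero.not.2 (measure_closedBall_pos μ x ht).ne'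

variable [BorelSpace E]

theorem measurePreserving_add_left_restrict_closedBall (x : E) (t : ℝ) :
    MeasurePreserving (x + ·) (μ.restrict (closedBall 0 t)) (μ.restrict (closedBall x t)) := by
  convert (measurePreserving_add_left μ x).restrict_preimage (measurableSet_closedBall (x := x)
    (ε := t)) using 2
  ext h
  simp [dist_eq_norm]

variable {μ}

theorem ballAverage_eq_setAverage (t : ℝ) (u : E → ℝ) (x : E) :
    ballAverage μ t u x = ⨍ y in closedBall x t, u y ∂μ := by
  have hmp := measurePreserving_add_left_restrict_closedBall μ x t
  rw [ballAverage, average_eq, average_eq, hmp.integral_comp (measurableEmbedding_addLeft x),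
    measureReal_def, measureReal_def, ← hmp.measure_preimage MeasurableSet.univ.nullMeasurableSet,
    Set.preimage_univ]

variable [ProperSpace E]

instance isFiniteMeasure_restrict_closedBall (x : E) (t : ℝ) :
    IsFiniteMeasure (μ.restrict (closedBall x t)) :=
  isFiniteMeasure_restrict.2 measure_closedBall_lt_top.ne

theorem integrable_comp_add_left_restrict_closedBall {u : E → ℝ}
    (hu : LocallyIntegrable u μ) (x : E) (t : ℝ) :
    Integrable (fun h => u (x + h)) (μ.restrict (closedBall 0 t)) :=
  ((measurePreserving_add_left_restrict_closedBall μ x t).integrable_comp_emb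
    (measurableEmbedding_addLeft x)).2 (hu.integrableOn_isCompact (isCompact_closedBall x t))

theorem ballAverage_sub {u v : E → ℝ} (hu : LocallyIntegrable u μ) (hv : LocallyIntegrable v μ)
    (t : ℝ) : ballAverage μ t (u - v) = ballAverage μ t u - ballAverage μ t v := by
  ext x
  simp only [ballAverage, Pi.sub_apply, average_eq, ← smul_sub]
  rw [integral_sub (integrable_comp_add_left_restrict_closedBall hu x t)
    (integrable_comp_add_left_restrict_closedBall hv x t)]

theorem measurable_ballAverage {u : E → ℝ} (hu : Measurable u) (t : ℝ) :
    Measurable (ballAverage μ t u) := by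
  have hint : Measurable fun x => ∫ h, u (x + h) ∂(μ.restrict (closedBall 0 t)) :=
    (hu.comp measurable_add).stronglyMeasurable.integral_prod_right'.measurable
  unfold ballAverage
  simp_rw [average_eq, smul_eq_mul]
  exact hint.const_mul _

theorem integrable_comp_add_prod_restrict_closedBall {u : E → ℝ} (hu : Measurable u)
    (hloc : LocallyIntegrable u μ) (x : E) (s t : ℝ) :
    Integrable (fun q : E × E => u (x + q.1 + q.2))
      ((μ.restrict (closedBall 0 s)).prod (μ.restrict (closedBall 0 t))) := by
  have hmeas : Measurable fun q : E × E => u (x + q.1 + q.2) :=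
    hu.comp ((measurable_const_add x).comp measurable_fst |>.add measurable_snd)
  refine ⟨hmeas.aestronglyMeasurable, ?_⟩
  set R := ∫⁻ y in closedBall x (s + t), ‖u y‖ₑ ∂μ
  have hR : R < ⊤ := (hloc.integrableOn_isCompact (isCompact_closedBall x (s + t))).2
  have hinner : ∀ᵐ h ∂μ.restrict (closedBall 0 s),
      ∫⁻ k, ‖u (x + h + k)‖ₑ ∂μ.restrict (closedBall 0 t) ≤ R := by
    refine (ae_restrict_iff' measurableSet_closedBall).2 (Eventually.of_forall fun h hh => ?_)
    rw [(measurePreserving_add_left_restrict_closedBall μ (x + h) t).lintegral_comp_emb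
      (measurableEmbedding_addLeft _) fun y => ‖u y‖ₑ]
    refine lintegral_mono_set (closedBall_subset_closedBall' ?_)
    rw [mem_closedBall_zero_iff] at hh
    simp only [dist_self_add_left]
    linarith
  rw [HasFiniteIntegral, lintegral_prod _ hmeas.enorm.aemeasurable]
  calc ∫⁻ h, ∫⁻ k, ‖u (x + h + k)‖ₑ ∂μ.restrict (closedBall 0 t) ∂μ.restrict (closedBall 0 s)
      ≤ ∫⁻ _, R ∂μ.restrict (closedBall 0 s) := lintegral_mono_ae hinner
    _ < ⊤ := by simpa using ENNReal.mul_lt_top hR measure_closedBall_lt_top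

theorem ballAverage_comm {u : E → ℝ} (hu : Measurable u) (hloc : LocallyIntegrable u μ)
    (s t : ℝ) : ballAverage μ s (ballAverage μ t u) = ballAverage μ t (ballAverage μ s u) := by
  ext x
  simp only [ballAverage, average_eq, integral_smul]
  rw [smul_comm,
    integral_integral_swap (integrable_comp_add_prod_restrict_closedBall hu hloc x s t)]
  simp only [add_right_comm x]

theorem eLpNorm_ballAverage_le {p : ℝ≥0∞} (hp : 1 ≤ p) (hp_top : p ≠ ⊤) {t : ℝ} (ht : 0 < t)
    {u : E → ℝ} (hu : Measurable u) : eLpNorm (ballAverage μ t u) p μ ≤ eLpNorm u p μ :=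
  eLpNorm_average_le (restrict_closedBall_ne_zero μ 0 ht) hp hp_top (g := fun x h => u (x + h))
    (hu.comp measurable_add).stronglyMeasurable
    (Eventually.of_forall fun h => (eLpNorm_comp_add_right μ hu.aestronglyMeasurable h p).le)

theorem eLpNorm_ballAverage_sub_le {p : ℝ≥0∞} (hp : 1 ≤ p) (hp_top : p ≠ ⊤) {t : ℝ} (ht : 0 < t)
    {u : E → ℝ} (hu : Measurable u) (hloc : LocallyIntegrable u μ) {C : ℝ≥0∞}
    (hC : ∀ h ∈ closedBall (0 : E) t, eLpNorm (fun x => u (x + h) - u x) p μ ≤ C) :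
    eLpNorm (ballAverage μ t u - u) p μ ≤ C := by
  have hne := restrict_closedBall_ne_zero μ 0 ht
  have hV : μ.real (closedBall (0 : E) t) ≠ 0 :=
    (ENNReal.toReal_pos (measure_closedBall_pos μ 0 ht).ne' measure_closedBall_lt_top.ne).ne'
  have hdiff : ballAverage μ t u - u = fun x => ⨍ h in closedBall 0 t, (u (x + h) - u x) ∂μ := by
    ext x
    rw [Pi.sub_apply, ballAverage, average_eq, average_eq, integral_sub
      (integrable_comp_add_left_restrict_closedBall hloc x t) (integrable_const _), smul_sub,
      integral_const, smul_smul, inv_mul_cancel₀ (by simpa using hV), one_smul]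
  rw [hdiff]
  exact eLpNorm_average_le hne hp hp_top
    ((hu.comp measurable_add).sub (hu.comp measurable_fst)).stronglyMeasurable
    ((ae_restrict_iff' measurableSet_closedBall).2 (Eventually.of_forall hC))

theorem enorm_ballAverage_le {p : ℝ≥0∞} (hp : 1 ≤ p) {t : ℝ} (ht : 0 < t) {u : E → ℝ}
    (hu : AEStronglyMeasurable u μ) (x : E) :
    ‖ballAverage μ t u x‖ₑ ≤ (μ (closedBall 0 t))⁻¹ ^ (1 / p.toReal) * eLpNorm u p μ := by
  set ν := μ.restrict (closedBall (0 : E) t)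
  set V := μ (closedBall (0 : E) t)
  have hV0 : V ≠ 0 := (measure_closedBall_pos μ 0 ht).ne'
  have hVtop : V ≠ ⊤ := measure_closedBall_lt_top.ne
  have hνV : ν Set.univ = V := Measure.restrict_apply_univ _
  have hr : 1 / p.toReal ≤ 1 := by
    rcases eq_or_ne p ⊤ with rfl | hp_top
    · simp
    · exact div_le_one_of_le₀ (by simpa using ENNReal.toReal_mono hp_top hp) ENNReal.toReal_nonneg
  have hslice : AEStronglyMeasurable (fun h => u (x + h)) ν :=
    (hu.comp_measurePreserving (measurePreserving_add_left μ x)).restrict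
  calc ‖ballAverage μ t u x‖ₑ ≤ V⁻¹ * eLpNorm (fun h => u (x + h)) 1 ν := by
        rw [eLpNorm_one_eq_lintegral_enorm, ← hνV]
        exact enorm_average_le ν _
    _ ≤ V⁻¹ * (eLpNorm (fun h => u (x + h)) p ν * V ^ (1 / 1 - 1 / p.toReal)) := by
        rw [← hνV]
        gcongr
        simpa using eLpNorm_le_eLpNorm_mul_rpow_measure_univ hp hslice
    _ ≤ V⁻¹ * (eLpNorm u p μ * V ^ (1 - 1 / p.toReal)) := by
        rw [div_one]
        gcongr
        calc eLpNorm (fun h => u (x + h)) p ν ≤ eLpNorm (fun h => u (x + h)) p μ :=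
              eLpNorm_mono_measure _ Measure.restrict_le_self
          _ = eLpNorm u p μ := eLpNorm_comp_measurePreserving hu (measurePreserving_add_left μ x)
    _ = V⁻¹ ^ (1 / p.toReal) * eLpNorm u p μ := by
        rw [mul_left_comm, ← ENNReal.rpow_neg_one, ← ENNReal.rpow_add _ _ hV0 hVtop,
          ← ENNReal.rpow_mul, mul_comm]
        ring_nf

/-- For `p₁ = ⊤` the exponent is `1 / p₀.toReal`, as `ENNReal.toReal ⊤ = 0`. -/
theorem eLpNorm_ballAverage_le_inv_rpow_mul {p₀ p₁ : ℝ≥0∞} (hp₀ : 1 ≤ p₀) (hp₀_top : p₀ ≠ ⊤)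
    (hp₀₁ : p₀ ≤ p₁) {t : ℝ} (ht : 0 < t) {u : E → ℝ} (hu : Measurable u) :
    eLpNorm (ballAverage μ t u) p₁ μ ≤
      (μ (closedBall 0 t))⁻¹ ^ (1 / p₀.toReal - 1 / p₁.toReal) * eLpNorm u p₀ μ := by
  set c := (μ (closedBall (0 : E) t))⁻¹
  have htop : eLpNorm (ballAverage μ t u) ⊤ μ ≤ c ^ (1 / p₀.toReal) * eLpNorm u p₀ μ := by
    rw [eLpNorm_exponent_top]
    exact eLpNormEssSup_le_of_ae_enorm_bound
      (Eventually.of_forall (enorm_ballAverage_le hp₀ ht hu.aestronglyMeasurable))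
  rcases eq_or_ne p₁ ⊤ with rfl | hp₁_top
  · simpa using htop
  have hp₀0 : p₀ ≠ 0 := (zero_lt_one.trans_le hp₀).ne'
  have hr₀ : 0 < p₀.toReal := ENNReal.toReal_pos hp₀0 hp₀_top
  have hr₁ : 0 < p₁.toReal := ENNReal.toReal_pos (hp₀0.bot_lt.trans_le hp₀₁).ne' hp₁_top
  set θ := p₀.toReal / p₁.toReal
  have hθ0 : 0 ≤ θ := by positivity
  have hθ1 : θ ≤ 1 := div_le_one_of_le₀ (ENNReal.toReal_mono hp₁_top hp₀₁) hr₁.le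
  calc eLpNorm (ballAverage μ t u) p₁ μ
      ≤ eLpNorm (ballAverage μ t u) ⊤ μ ^ (1 - θ) * eLpNorm (ballAverage μ t u) p₀ μ ^ θ :=
        eLpNorm_le_eLpNorm_top_rpow_mul_eLpNorm_rpow
          (measurable_ballAverage hu t).aestronglyMeasurable hp₀0 hp₀₁ hp₁_top
    _ ≤ (c ^ (1 / p₀.toReal) * eLpNorm u p₀ μ) ^ (1 - θ) * eLpNorm u p₀ μ ^ θ := by
        exact mul_le_mul' (ENNReal.rpow_le_rpow htop (by linarith))
          (ENNReal.rpow_le_rpow (eLpNorm_ballAverage_le hp₀ hp₀_top ht hu) hθ0)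
    _ = c ^ (1 / p₀.toReal - 1 / p₁.toReal) * eLpNorm u p₀ μ := by
        rw [ENNReal.mul_rpow_of_nonneg _ _ (by linarith), ← ENNReal.rpow_mul, mul_assoc,
          ← ENNReal.rpow_add_of_nonneg _ _ (by linarith) hθ0, sub_add_cancel, ENNReal.rpow_one]
        congr 2
        simp only [θ]
        field_simp

theorem eLpNorm_ballAverage_sub_ballAverage_le {p₀ p₁ : ℝ≥0∞} (hp₀ : 1 ≤ p₀) (hp₀_top : p₀ ≠ ⊤)
    (hp₀₁ : p₀ ≤ p₁) {s t : ℝ} (hs : 0 < s) (hst : s ≤ t) {u : E → ℝ} (hu : Measurable u)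
    (hu' : MemLp u p₀ μ) {C : ℝ≥0∞}
    (hC : ∀ h ∈ closedBall (0 : E) t, eLpNorm (fun x => u (x + h) - u x) p₀ μ ≤ C) :
    eLpNorm (ballAverage μ s u - ballAverage μ t u) p₁ μ ≤
      2 * (μ (closedBall 0 s))⁻¹ ^ (1 / p₀.toReal - 1 / p₁.toReal) * C := by
  have ht : 0 < t := hs.trans_le hst
  have hδ : 0 ≤ 1 / p₀.toReal - 1 / p₁.toReal :=
    sub_nonneg.2 (ENNReal.one_div_toReal_le_one_div_toReal (zero_lt_one.trans_le hp₀).ne' hp₀₁)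
  have hloc : LocallyIntegrable u μ := hu'.locallyIntegrable hp₀
  have hlocAvg : ∀ r > 0, LocallyIntegrable (ballAverage μ r u) μ := fun r hr =>
    MemLp.locallyIntegrable ⟨(measurable_ballAverage hu r).aestronglyMeasurable,
      (eLpNorm_ballAverage_le hp₀ hp₀_top hr hu).trans_lt hu'.2⟩ hp₀
  have hsplit : ballAverage μ s u - ballAverage μ t u =
      ballAverage μ s (u - ballAverage μ t u) + ballAverage μ t (ballAverage μ s u - u) := by
    rw [ballAverage_sub hloc (hlocAvg t ht), ballAverage_sub (hlocAvg s hs) hloc,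
      ballAverage_comm hu hloc]
    abel
  have hfirst : eLpNorm (ballAverage μ s (u - ballAverage μ t u)) p₁ μ ≤
      (μ (closedBall 0 s))⁻¹ ^ (1 / p₀.toReal - 1 / p₁.toReal) * C := by
    refine (eLpNorm_ballAverage_le_inv_rpow_mul hp₀ hp₀_top hp₀₁ hs
      (hu.sub (measurable_ballAverage hu t))).trans (mul_le_mul' le_rfl ?_)
    rw [eLpNorm_sub_comm]
    exact eLpNorm_ballAverage_sub_le hp₀ hp₀_top ht hu hloc hC
  have hsecond : eLpNorm (ballAverage μ t (ballAverage μ s u - u)) p₁ μ ≤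
      (μ (closedBall 0 s))⁻¹ ^ (1 / p₀.toReal - 1 / p₁.toReal) * C := by
    refine (eLpNorm_ballAverage_le_inv_rpow_mul hp₀ hp₀_top hp₀₁ ht
      ((measurable_ballAverage hu s).sub hu)).trans (mul_le_mul' ?_ ?_)
    · gcongr
    · exact eLpNorm_ballAverage_sub_le hp₀ hp₀_top hs hu hloc fun h hh =>
        hC h (closedBall_subset_closedBall hst hh)
  rw [hsplit, mul_assoc, two_mul]
  exact (eLpNorm_add_le
    (measurable_ballAverage (hu.sub (measurable_ballAverage hu t)) s).aestronglyMeasurable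
    (measurable_ballAverage ((measurable_ballAverage hu s).sub hu) t).aestronglyMeasurable
    (hp₀.trans hp₀₁)).trans (add_le_add hfirst hsecond)

theorem eLpNorm_le_of_eLpNorm_sub_ballAverage_le {p₀ p₁ : ℝ≥0∞} (hp₀ : 1 ≤ p₀)
    (hp₀_top : p₀ ≠ ⊤) (hp₀₁ : p₀ ≤ p₁) {u : E → ℝ} (hu : Measurable u) {K : ℝ≥0∞}
    (hK : eLpNorm (u - ballAverage μ 1 u) p₁ μ ≤ K) :
    eLpNorm u p₁ μ ≤
      K + (μ (closedBall 0 1))⁻¹ ^ (1 / p₀.toReal - 1 / p₁.toReal) * eLpNorm u p₀ μ := by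
  have hA := measurable_ballAverage (μ := μ) hu 1
  calc eLpNorm u p₁ μ
      ≤ eLpNorm (u - ballAverage μ 1 u) p₁ μ + eLpNorm (ballAverage μ 1 u) p₁ μ := by
        simpa using eLpNorm_add_le (hu.sub hA).aestronglyMeasurable hA.aestronglyMeasurable
          (hp₀.trans hp₀₁)
    _ ≤ _ := add_le_add hK (eLpNorm_ballAverage_le_inv_rpow_mul hp₀ hp₀_top hp₀₁ one_pos hu)

end BallAverage

section Nikolskii

variable {E : Type*} [NormedAddCommGroup E] [NormedSpace ℝ E] [FiniteDimensional ℝ E]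
  [MeasurableSpace E] [BorelSpace E] (μ : Measure E) [μ.IsAddHaarMeasure]

theorem inv_measure_closedBall_rpow {t : ℝ} (ht : 0 < t) (δ : ℝ) :
    (μ (closedBall (0 : E) t))⁻¹ ^ δ =
      ENNReal.ofReal (t ^ (-(finrank ℝ E * δ))) * (μ (closedBall (0 : E) 1))⁻¹ ^ δ := by
  have htd : 0 < t ^ finrank ℝ E := pow_pos ht _
  rw [Measure.addHaar_closedBall' μ 0 ht.le, ENNReal.mul_inv (by simp [htd]) (by simp),
    ENNReal.mul_rpow_of_ne_zero (by simp) (by simp [measure_closedBall_lt_top.ne]),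
    ← ENNReal.ofReal_inv_of_pos htd, ENNReal.ofReal_rpow_of_pos (by positivity),
    ← Real.rpow_natCast, Real.inv_rpow (by positivity), ← Real.rpow_mul ht.le, Real.rpow_neg ht.le]

variable {μ}

theorem ae_tendsto_ballAverage {u : E → ℝ} (hu : LocallyIntegrable u μ) {δ : ℕ → ℝ}
    (hδ : Tendsto δ atTop (𝓝[>] 0)) :
    ∀ᵐ x ∂μ, Tendsto (fun n => ballAverage μ (δ n) u x) atTop (𝓝 (u x)) := by
  filter_upwards [IsUnifLocDoublingMeasure.ae_tendsto_average μ hu 1] with x hx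
  simpa only [ballAverage_eq_setAverage] using
    hx (fun _ => x) δ hδ ((hδ.eventually self_mem_nhdsWithin).mono fun n hn =>
      mem_closedBall_self (by rw [one_mul]; exact le_of_lt hn))

theorem eLpNorm_sub_ballAverage_le_of_half {p : ℝ≥0∞} (hp : 1 ≤ p) {s : ℝ}
    {u : E → ℝ} (hu : Measurable u) (hloc : LocallyIntegrable u μ) {K : ℝ≥0∞}
    (hK : ∀ t > 0, eLpNorm (ballAverage μ (t / 2) u - ballAverage μ t u) p μ ≤
      K * ENNReal.ofReal (t ^ s))
    {t : ℝ} (ht : 0 < t) :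
    eLpNorm (u - ballAverage μ t u) p μ ≤
      K * (1 - ENNReal.ofReal (2 ^ (-s)))⁻¹ * ENNReal.ofReal (t ^ s) := by
  set ρ := ENNReal.ofReal (2 ^ (-s))
  have hscale : Tendsto (fun n : ℕ => t / 2 ^ n) atTop (𝓝[>] 0) :=
    tendsto_nhdsWithin_of_tendsto_nhds_of_eventually_within _
      (tendsto_const_nhds.div_atTop (tendsto_pow_atTop_atTop_of_one_lt one_lt_two))
      (Eventually.of_forall fun n => Set.mem_Ioi.2 (by positivity))
  have hpow : ∀ n : ℕ, ENNReal.ofReal ((t / 2 ^ n) ^ s) = ENNReal.ofReal (t ^ s) * ρ ^ n := by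
    intro n
    rw [← ENNReal.ofReal_pow (by positivity), ← ENNReal.ofReal_mul (by positivity),
      Real.div_rpow ht.le (by positivity), ← Real.rpow_pow_comm zero_le_two,
      Real.rpow_neg zero_le_two, inv_pow, div_eq_mul_inv]
  have hsum := eLpNorm_sub_le_tsum_eLpNorm_sub hp
    (fun n => (measurable_ballAverage (μ := μ) hu (t / 2 ^ n)).aestronglyMeasurable)
    (ae_tendsto_ballAverage hloc hscale)
  simp only [pow_zero, div_one] at hsum
  refine hsum.trans ?_
  calc ∑' n : ℕ, eLpNorm (ballAverage μ (t / 2 ^ (n + 1)) u - ballAverage μ (t / 2 ^ n) u) p μ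
      ≤ ∑' n : ℕ, K * ENNReal.ofReal (t ^ s) * ρ ^ n := by
        refine ENNReal.tsum_le_tsum fun n => ?_
        rw [pow_succ, ← div_div, mul_assoc, ← hpow]
        exact hK _ (by positivity)
    _ = K * (1 - ρ)⁻¹ * ENNReal.ofReal (t ^ s) := by
        rw [ENNReal.tsum_mul_left, ENNReal.tsum_geometric]
        ring

variable {p₀ p₁ : ℝ≥0∞} {s₀ s₁ : ℝ}

theorem eLpNorm_ballAverage_half_sub_ballAverage_le (hp₀ : 1 ≤ p₀) (hp₀_top : p₀ ≠ ⊤)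
    (hp₀₁ : p₀ ≤ p₁) (hexp : finrank ℝ E * (1 / p₀.toReal - 1 / p₁.toReal) = s₀ - s₁)
    (hs₀ : 0 ≤ s₀) {u : E → ℝ} (hu : Measurable u) (hu' : MemLp u p₀ μ) {N : ℝ≥0∞}
    (hN : ∀ h, eLpNorm (fun x => u (x + h) - u x) p₀ μ ≤ N * ENNReal.ofReal (‖h‖ ^ s₀))
    {t : ℝ} (ht : 0 < t) :
    eLpNorm (ballAverage μ (t / 2) u - ballAverage μ t u) p₁ μ ≤
      2 * ENNReal.ofReal (2 ^ (s₀ - s₁)) *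
        (μ (closedBall 0 1))⁻¹ ^ (1 / p₀.toReal - 1 / p₁.toReal) * N * ENNReal.ofReal (t ^ s₁) := by
  have hC : ∀ h ∈ closedBall (0 : E) t,
      eLpNorm (fun x => u (x + h) - u x) p₀ μ ≤ N * ENNReal.ofReal (t ^ s₀) := fun h hh =>
    (hN h).trans (by gcongr; simpa using hh)
  have hscale : (t / 2) ^ (-(s₀ - s₁)) * t ^ s₀ = 2 ^ (s₀ - s₁) * t ^ s₁ := by
    rw [Real.div_rpow ht.le zero_le_two, Real.rpow_neg zero_le_two, div_inv_eq_mul,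
      mul_right_comm, ← Real.rpow_add ht, neg_sub, sub_add_cancel, mul_comm]
  refine (eLpNorm_ballAverage_sub_ballAverage_le hp₀ hp₀_top hp₀₁ (half_pos ht) (half_le_self ht.le)
    hu hu' hC).trans_eq ?_
  have hfactor : ENNReal.ofReal ((t / 2) ^ (-(s₀ - s₁))) * ENNReal.ofReal (t ^ s₀) =
      ENNReal.ofReal (2 ^ (s₀ - s₁)) * ENNReal.ofReal (t ^ s₁) := by
    rw [← ENNReal.ofReal_mul (by positivity), hscale, ENNReal.ofReal_mul (by positivity)]
  rw [inv_measure_closedBall_rpow μ (half_pos ht), hexp]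
  calc _ = 2 * (ENNReal.ofReal ((t / 2) ^ (-(s₀ - s₁))) * ENNReal.ofReal (t ^ s₀)) *
        (μ (closedBall 0 1))⁻¹ ^ (1 / p₀.toReal - 1 / p₁.toReal) * N := by ring
    _ = _ := by rw [hfactor]; ring

theorem eLpNorm_sub_ballAverage_le (hp₀ : 1 ≤ p₀) (hp₀_top : p₀ ≠ ⊤) (hp₀₁ : p₀ ≤ p₁)
    (hexp : finrank ℝ E * (1 / p₀.toReal - 1 / p₁.toReal) = s₀ - s₁) (hs₀ : 0 ≤ s₀)
    {u : E → ℝ} (hu : Measurable u) (hu' : MemLp u p₀ μ) {N : ℝ≥0∞}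
    (hN : ∀ h, eLpNorm (fun x => u (x + h) - u x) p₀ μ ≤ N * ENNReal.ofReal (‖h‖ ^ s₀))
    {t : ℝ} (ht : 0 < t) :
    eLpNorm (u - ballAverage μ t u) p₁ μ ≤
      2 * ENNReal.ofReal (2 ^ (s₀ - s₁)) *
        (μ (closedBall 0 1))⁻¹ ^ (1 / p₀.toReal - 1 / p₁.toReal) * N *
          (1 - ENNReal.ofReal (2 ^ (-s₁)))⁻¹ * ENNReal.ofReal (t ^ s₁) :=
  eLpNorm_sub_ballAverage_le_of_half (hp₀.trans hp₀₁) hu (hu'.locallyIntegrable hp₀)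
    (fun _ ht' => eLpNorm_ballAverage_half_sub_ballAverage_le hp₀ hp₀_top hp₀₁ hexp hs₀ hu hu' hN
      ht') ht

theorem eLpNorm_ballAverage_comp_add_right_sub_le (hp₀ : 1 ≤ p₀) (hp₀_top : p₀ ≠ ⊤)
    (hp₀₁ : p₀ ≤ p₁) (hexp : finrank ℝ E * (1 / p₀.toReal - 1 / p₁.toReal) = s₀ - s₁)
    {u : E → ℝ} (hu : Measurable u) (hu' : MemLp u p₀ μ) {N : ℝ≥0∞}
    (hN : ∀ h, eLpNorm (fun x => u (x + h) - u x) p₀ μ ≤ N * ENNReal.ofReal (‖h‖ ^ s₀))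
    {h : E} (hh : h ≠ 0) :
    eLpNorm (fun x => ballAverage μ ‖h‖ u (x + h) - ballAverage μ ‖h‖ u x) p₁ μ ≤
      (μ (closedBall 0 1))⁻¹ ^ (1 / p₀.toReal - 1 / p₁.toReal) * N * ENNReal.ofReal (‖h‖ ^ s₁) := by
  have ht : 0 < ‖h‖ := norm_pos_iff.2 hh
  have hloc := hu'.locallyIntegrable hp₀
  have htranslate : (fun x => ballAverage μ ‖h‖ u (x + h) - ballAverage μ ‖h‖ u x) =
      ballAverage μ ‖h‖ (fun x => u (x + h) - u x) := by
    ext x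
    rw [← ballAverage_comp_add_right]
    exact (congrFun (ballAverage_sub ((hu'.comp_measurePreserving
      (measurePreserving_add_right μ h)).locallyIntegrable hp₀) hloc ‖h‖) x).symm
  have hscale : ENNReal.ofReal (‖h‖ ^ (-(s₀ - s₁))) * ENNReal.ofReal (‖h‖ ^ s₀) =
      ENNReal.ofReal (‖h‖ ^ s₁) := by
    rw [← ENNReal.ofReal_mul (by positivity), ← Real.rpow_add ht, neg_sub, sub_add_cancel]
  rw [htranslate]
  calc eLpNorm (ballAverage μ ‖h‖ (fun x => u (x + h) - u x)) p₁ μ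
      ≤ (μ (closedBall 0 ‖h‖))⁻¹ ^ (1 / p₀.toReal - 1 / p₁.toReal) *
          (N * ENNReal.ofReal (‖h‖ ^ s₀)) :=
        (eLpNorm_ballAverage_le_inv_rpow_mul hp₀ hp₀_top hp₀₁ ht
          ((hu.comp (measurable_add_const h)).sub hu)).trans (mul_le_mul' le_rfl (hN h))
    _ = _ := by
        rw [inv_measure_closedBall_rpow μ ht, hexp, ← hscale]
        ring

theorem eLpNorm_comp_add_right_sub_le_of_eLpNorm_sub_ballAverage_le (hp₀ : 1 ≤ p₀)
    (hp₀_top : p₀ ≠ ⊤) (hp₀₁ : p₀ ≤ p₁)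
    (hexp : finrank ℝ E * (1 / p₀.toReal - 1 / p₁.toReal) = s₀ - s₁)
    {u : E → ℝ} (hu : Measurable u) (hu' : MemLp u p₀ μ) {N : ℝ≥0∞}
    (hN : ∀ h, eLpNorm (fun x => u (x + h) - u x) p₀ μ ≤ N * ENNReal.ofReal (‖h‖ ^ s₀))
    {K : ℝ≥0∞} (hK : ∀ t > 0, eLpNorm (u - ballAverage μ t u) p₁ μ ≤ K * ENNReal.ofReal (t ^ s₁))
    (h : E) :
    eLpNorm (fun x => u (x + h) - u x) p₁ μ ≤
      (2 * K + (μ (closedBall 0 1))⁻¹ ^ (1 / p₀.toReal - 1 / p₁.toReal) * N) *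
        ENNReal.ofReal (‖h‖ ^ s₁) := by
  rcases eq_or_ne h 0 with rfl | hh
  · simp
  set A := ballAverage μ ‖h‖ u
  have hA : Measurable A := measurable_ballAverage hu _
  have hsplit : (fun x => u (x + h) - u x) =
      (fun x => (u - A) (x + h) - (u - A) x) + fun x => A (x + h) - A x := by
    ext x
    simp only [Pi.add_apply, Pi.sub_apply]
    ring
  calc eLpNorm (fun x => u (x + h) - u x) p₁ μ
      ≤ eLpNorm (fun x => (u - A) (x + h) - (u - A) x) p₁ μ +
          eLpNorm (fun x => A (x + h) - A x) p₁ μ := by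
        rw [hsplit]
        exact eLpNorm_add_le
          (((hu.sub hA).comp (measurable_add_const h)).sub (hu.sub hA)).aestronglyMeasurable
          ((hA.comp (measurable_add_const h)).sub hA).aestronglyMeasurable (hp₀.trans hp₀₁)
    _ ≤ 2 * (K * ENNReal.ofReal (‖h‖ ^ s₁)) +
          (μ (closedBall 0 1))⁻¹ ^ (1 / p₀.toReal - 1 / p₁.toReal) * N *
            ENNReal.ofReal (‖h‖ ^ s₁) :=
        add_le_add ((eLpNorm_comp_add_right_sub_le_s6 μ (hp₀.trans hp₀₁)
          (hu.sub hA).aestronglyMeasurable h).trans (mul_le_mul' le_rfl (hK _ (norm_pos_iff.2 hh))))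
          (eLpNorm_ballAverage_comp_add_right_sub_le hp₀ hp₀_top hp₀₁ hexp hu hu' hN hh)
    _ = _ := by ring

variable (μ)

theorem exists_eLpNorm_le_and_eLpNorm_comp_add_right_sub_le (hp₀ : 1 ≤ p₀) (hp₀_top : p₀ ≠ ⊤)
    (hp₀₁ : p₀ ≤ p₁) (hs₁ : 0 < s₁)
    (hexp : finrank ℝ E * (1 / p₀.toReal - 1 / p₁.toReal) = s₀ - s₁) :
    ∃ L : ℝ≥0∞, L ≠ ⊤ ∧ ∀ u : E → ℝ, MemLp u p₀ μ → ∀ N : ℝ≥0∞,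
      (∀ h, eLpNorm (fun x => u (x + h) - u x) p₀ μ ≤ N * ENNReal.ofReal (‖h‖ ^ s₀)) →
      eLpNorm u p₁ μ ≤ L * (eLpNorm u p₀ μ + N) ∧
      ∀ h, eLpNorm (fun x => u (x + h) - u x) p₁ μ ≤
        L * (eLpNorm u p₀ μ + N) * ENNReal.ofReal (‖h‖ ^ s₁) := by
  have hδ : 0 ≤ 1 / p₀.toReal - 1 / p₁.toReal :=
    sub_nonneg.2 (ENNReal.one_div_toReal_le_one_div_toReal (zero_lt_one.trans_le hp₀).ne' hp₀₁)
  have hs₀ : 0 ≤ s₀ := by linarith [mul_nonneg (Nat.cast_nonneg (finrank ℝ E)) hδ]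
  set c := (μ (closedBall (0 : E) 1))⁻¹ ^ (1 / p₀.toReal - 1 / p₁.toReal)
  set K := 2 * ENNReal.ofReal (2 ^ (s₀ - s₁)) * c * (1 - ENNReal.ofReal (2 ^ (-s₁)))⁻¹
  have hc : c ≠ ⊤ := ENNReal.rpow_ne_top_of_nonneg hδ
    (ENNReal.inv_ne_top.2 (measure_closedBall_pos μ 0 one_pos).ne')
  have hρ : ENNReal.ofReal (2 ^ (-s₁)) < 1 :=
    ENNReal.ofReal_lt_one.2 (Real.rpow_lt_one_of_one_lt_of_neg one_lt_two (neg_neg_of_pos hs₁))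
  have hK : K ≠ ⊤ := by
    have : (1 - ENNReal.ofReal (2 ^ (-s₁)))⁻¹ ≠ ⊤ := ENNReal.inv_ne_top.2 (tsub_pos_of_lt hρ).ne'
    finiteness
  refine ⟨2 * K + c, by finiteness, fun u hu N hN => ?_⟩
  obtain ⟨w, hw, hae⟩ : ∃ w, Measurable w ∧ u =ᵐ[μ] w :=
    ⟨_, hu.1.stronglyMeasurable_mk.measurable, hu.1.ae_eq_mk⟩
  have hw' : MemLp w p₀ μ := (memLp_congr_ae hae).1 hu
  simp only [eLpNorm_congr_ae hae, eLpNorm_comp_add_right_sub_congr_ae μ hae] at hN ⊢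
  have htail : ∀ t > 0, eLpNorm (w - ballAverage μ t w) p₁ μ ≤ K * N * ENNReal.ofReal (t ^ s₁) :=
    fun t ht => (eLpNorm_sub_ballAverage_le hp₀ hp₀_top hp₀₁ hexp hs₀ hw hw' hN ht).trans_eq
      (by ring)
  constructor
  · calc eLpNorm w p₁ μ ≤ K * N + c * eLpNorm w p₀ μ :=
          eLpNorm_le_of_eLpNorm_sub_ballAverage_le hp₀ hp₀_top hp₀₁ hw
            (by simpa using htail 1 one_pos)
      _ ≤ (2 * K + c) * N + (2 * K + c) * eLpNorm w p₀ μ := by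
          gcongr
          · exact le_add_right (le_mul_of_one_le_left' one_le_two)
          · exact le_add_self
      _ = (2 * K + c) * (eLpNorm w p₀ μ + N) := by ring
  · intro h
    calc _ ≤ (2 * (K * N) + c * N) * ENNReal.ofReal (‖h‖ ^ s₁) :=
          eLpNorm_comp_add_right_sub_le_of_eLpNorm_sub_ballAverage_le hp₀ hp₀_top hp₀₁ hexp hw hw'
            hN htail h
      _ ≤ (2 * K + c) * (eLpNorm w p₀ μ + N) * ENNReal.ofReal (‖h‖ ^ s₁) := by
          rw [← mul_assoc, ← add_mul]
          gcongr
          exact le_add_self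

end Nikolskii

theorem eLpNorm_comp_add_right_sub_le_nikSeminorm_mul {d : ℕ} {γ : ℝ} {p : ℝ≥0∞}
    (u : EuclideanSpace ℝ (Fin d) → ℝ) (k : EuclideanSpace ℝ (Fin d)) :
    eLpNorm (fun x => u (x + k) - u x) p volume ≤
      nikSeminorm d γ p u * ENNReal.ofReal (‖k‖ ^ γ) := by
  rcases eq_or_ne k 0 with rfl | hk
  · simp
  have hpos : 0 < ENNReal.ofReal (‖k‖ ^ γ) :=
    ENNReal.ofReal_pos.2 (Real.rpow_pos_of_pos (norm_pos_iff.2 hk) γ)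
  rw [← ENNReal.div_le_iff hpos.ne' ENNReal.ofReal_ne_top]
  exact le_iSup₂ (f := fun k (_ : k ≠ 0) =>
    eLpNorm (fun x => u (x + k) - u x) p volume / ENNReal.ofReal (‖k‖ ^ γ)) k hk

theorem nikSeminorm_le_of_forall_le {d : ℕ} {γ : ℝ} {p : ℝ≥0∞}
    {u : EuclideanSpace ℝ (Fin d) → ℝ} {C : ℝ≥0∞}
    (h : ∀ k, eLpNorm (fun x => u (x + k) - u x) p volume ≤ C * ENNReal.ofReal (‖k‖ ^ γ)) :
    nikSeminorm d γ p u ≤ C :=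
  iSup₂_le fun k _ => ENNReal.div_le_of_le_mul (h k)

theorem nikolskii_embedding_general
    (d : ℕ) (p₀ p₁ : ℝ≥0∞) (hp₀ : 1 ≤ p₀) (hp₀₁ : p₀ ≤ p₁)
    (s₀ s₁ : ℝ) (hs₁ : 0 < s₁)
    (hdiff : s₀ - (d : ℝ) / p₀.toReal = s₁ - (d : ℝ) / p₁.toReal) :
    ∃ C : ℝ, 0 < C ∧
      ∀ u : EuclideanSpace ℝ (Fin d) → ℝ,
        MemLp u p₀ volume →
        nikSeminorm d s₀ p₀ u ≠ ⊤ →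
        MemLp u p₁ volume ∧
        nikSeminorm d s₁ p₁ u ≠ ⊤ ∧
        eLpNorm u p₁ volume + nikSeminorm d s₁ p₁ u ≤
          ENNReal.ofReal C * (eLpNorm u p₀ volume + nikSeminorm d s₀ p₀ u) := by
  rcases hp₀₁.eq_or_lt with rfl | hlt
  · obtain rfl : s₀ = s₁ := by linarith
    exact ⟨1, one_pos, fun u hu hN => ⟨hu, hN, by simp⟩⟩
  have hexp : (finrank ℝ (EuclideanSpace ℝ (Fin d)) : ℝ) * (1 / p₀.toReal - 1 / p₁.toReal) =
      s₀ - s₁ := by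
    rw [finrank_euclideanSpace_fin, mul_sub, mul_one_div, mul_one_div]
    linarith
  obtain ⟨L, hL, hbound⟩ := exists_eLpNorm_le_and_eLpNorm_comp_add_right_sub_le volume hp₀
    hlt.ne_top hp₀₁ hs₁ hexp
  refine ⟨2 * L.toReal + 1, by positivity, fun u hu hN => ?_⟩
  obtain ⟨hnorm, htranslate⟩ :=
    hbound u hu _ (eLpNorm_comp_add_right_sub_le_nikSeminorm_mul u)
  have hnik := nikSeminorm_le_of_forall_le htranslate
  have hfin : L * (eLpNorm u p₀ volume + nikSeminorm d s₀ p₀ u) ≠ ⊤ := by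
    have hM : eLpNorm u p₀ volume ≠ ⊤ := hu.2.ne
    finiteness
  refine ⟨⟨hu.1, hnorm.trans_lt hfin.lt_top⟩, ne_top_of_le_ne_top hfin hnik, ?_⟩
  calc _ ≤ 2 * L * (eLpNorm u p₀ volume + nikSeminorm d s₀ p₀ u) := by
        rw [mul_assoc, two_mul]
        exact add_le_add hnorm hnik
    _ ≤ ENNReal.ofReal (2 * L.toReal + 1) * (eLpNorm u p₀ volume + nikSeminorm d s₀ p₀ u) := by
        gcongr
        rw [ENNReal.ofReal_add (by positivity) zero_le_one, ENNReal.ofReal_mul zero_le_two,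
          ENNReal.ofReal_toReal hL, ENNReal.ofReal_ofNat]
        exact le_self_add

/-- (Nikolskii embedding, same differential dimension.)
If `1 ≤ p₀ ≤ p₁ ≤ ∞`, `0 < s₁ ≤ s₀ < 1` and `s₀ − d/p₀ = s₁ − d/p₁`, then
`N^{s₀}_{p₀}(ℝ^d) ↪ N^{s₁}_{p₁}(ℝ^d)` with a norm bound. (Here `d/∞ = 0`; note that
`p.toReal = 0` for `p = ∞`, and real division by `0` yields `0`.) -/
theorem nikolskii_embedding
    (d : ℕ) (hd : 1 ≤ d) (p₀ p₁ : ℝ≥0∞) (hp₀ : 1 ≤ p₀) (hp₀₁ : p₀ ≤ p₁)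
    (s₀ s₁ : ℝ) (hs₁ : 0 < s₁) (hs₁₀ : s₁ ≤ s₀) (hs₀ : s₀ < 1)
    (hdiff : s₀ - (d : ℝ) / p₀.toReal = s₁ - (d : ℝ) / p₁.toReal) :
    ∃ C : ℝ, 0 < C ∧
      ∀ u : EuclideanSpace ℝ (Fin d) → ℝ,
        MemLp u p₀ volume →
        nikSeminorm d s₀ p₀ u ≠ ⊤ →
        MemLp u p₁ volume ∧
        nikSeminorm d s₁ p₁ u ≠ ⊤ ∧
        eLpNorm u p₁ volume + nikSeminorm d s₁ p₁ u ≤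
          ENNReal.ofReal C * (eLpNorm u p₀ volume + nikSeminorm d s₀ p₀ u) :=
  nikolskii_embedding_general d p₀ p₁ hp₀ hp₀₁ s₀ s₁ hs₁ hdiff
end
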